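/- arXiv:1404.1756 — 8 statements merged into one kernel-verified Lean document; each statement's English description precedes it below -/
import Mathlib

section
/- Let δ, μ₁, μ₂, β > 0, p > 1, and (w₁, w₂) a positive bounded C² solution on ℝ of w₁'' - δ²w₁ + μ₁w₁^{2p-1} + βw₁^{p-1}w₂^p = 0, w₂'' - δ²w₂ + μ₂w₂^{2p-1} + βw₂^{p-1}w₁^p = 0, whose energy Ψ is a nonnegative constant, and assume w₁, w₂, w₁', w₂' are bounded. Then w₁(t) < λ₁ := (pδ²/μ₁)^{1/(2p-2)} and w₂(t) < λ₂ := (pδ²/μ₂)^{1/(2p-2)} for all t ∈ ℝ. -/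
/-
Each component is handled separately. Write `F x = δ²x²/2 - μx^{2p}/(2p)`, so that
`w'' = F'(w) - h` with the coupling term `h = βw^{p-1}v^p > 0`, and `E = F(w) - w'²/2`.
Then `E' = h w'`, so `E` decreases exactly while `w` does. Moreover `F(x) ≤ 0` iff `x ≥ λ`, and
on `[λ, ∞)` the force `F'(x) = δ²x - μx^{2p-1}` is at most `-(p-1)δ²λ < 0`.

If `w' < 0` and `E < 0` at some time, then `w'` never returns to `0`: at a first zero `E < 0`
forces `w ≥ λ`, hence `w'' < 0`, which is incompatible with `w'` increasing to `0`. So `w` decreases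
forever, and either it drops below `λ`, after which `F(w) > 0` gives `w' ≤ -√(-2E)` and `w` becomes
negative, or it stays above `λ`, after which `w'' ≤ -(p-1)δ²λ` makes `w'` unbounded.
Now if `w(t₀) ≥ λ`, reverse time so that `w'(t₀) ≤ 0`; either `E(t₀) < 0` already, or `w'(t₀) = 0`,
`w''(t₀) < 0`, and `E` turns negative just after `t₀` while `w' < 0`.
-/

open Set Filter Topology

namespace CoupledSystem

variable {δ μ p M : ℝ} {w h : ℝ → ℝ}

lemma exists_zero_and_neg_on_Ico {v : ℝ → ℝ} {a b : ℝ} (hv : ContinuousOn v (Icc a b))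
    (ha : v a < 0) (hab : a ≤ b) (hb : 0 ≤ v b) :
    ∃ c, a < c ∧ v c = 0 ∧ ∀ t ∈ Ico a c, v t < 0 := by
  obtain ⟨c, ⟨⟨hac, hcb⟩, hvc⟩, hmin⟩ :
      ∃ c ∈ Icc a b ∩ v ⁻¹' Ici 0, ∀ t ∈ Icc a b ∩ v ⁻¹' Ici 0, c ≤ t := by
    have hS := hv.preimage_isClosed_of_isClosed isClosed_Icc (isClosed_Ici (a := 0))
    have hSb : BddBelow (Icc a b ∩ v ⁻¹' Ici 0) := ⟨a, fun t ht => ht.1.1⟩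
    exact ⟨_, hS.csInf_mem ⟨b, ⟨hab, le_rfl⟩, hb⟩ hSb, fun t ht => csInf_le hSb ht⟩
  have hneg : ∀ t ∈ Ico a c, v t < 0 := fun t ht => by
    by_contra! hvt
    exact (hmin t ⟨⟨ht.1, ht.2.le.trans hcb⟩, hvt⟩).not_gt ht.2
  obtain ⟨d, hd, hvd⟩ := intermediate_value_Icc hac (hv.mono (Icc_subset_Icc_right hcb))
    ⟨ha.le, hvc⟩
  have hcd : c = d := le_antisymm (hmin d ⟨⟨hd.1, hd.2.trans hcb⟩, hvd.ge⟩) hd.2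
  refine ⟨c, hac.lt_of_ne ?_, hcd ▸ hvd, hneg⟩
  rintro rfl
  exact ha.not_ge hvc

lemma eventually_deriv_pos_left_and_neg_right {c : ℝ}
    (h₂ : deriv (deriv w) c < 0) (h₁ : deriv w c = 0) :
    (∀ᶠ t in 𝓝[<] c, 0 < deriv w t) ∧ ∀ᶠ t in 𝓝[>] c, deriv w t < 0 := by
  have hsign := nhdsWithin_le_nhds (s := {c}ᶜ) (eventually_nhdsWithin_sign_eq_of_deriv_neg h₂ h₁)
  exact ⟨deriv_pos_left_of_sign_deriv hsign, deriv_neg_right_of_sign_deriv hsign⟩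

lemma exists_lt_of_deriv_le_neg {g : ℝ → ℝ} (hg : Differentiable ℝ g) {a c : ℝ} (hc : 0 < c)
    (hd : ∀ t, a ≤ t → deriv g t ≤ -c) (b : ℝ) : ∃ t, g t < b := by
  set t := a + (|g a - b| + 1) / c
  have hat : a ≤ t := le_add_of_nonneg_right (by positivity)
  have hmvt := (convex_Ici a).image_sub_le_mul_sub_of_deriv_le hg.continuous.continuousOn
    hg.differentiableOn (fun x hx => hd x (interior_subset hx)) a self_mem_Ici t hat hat
  have hdrop : -c * (t - a) = -(|g a - b| + 1) := by simp only [t]; field_simp; ring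
  exact ⟨t, by linarith [le_abs_self (g a - b)]⟩

lemma deriv_deriv_comp_neg (f : ℝ → ℝ) (x : ℝ) :
    deriv (deriv fun y => f (-y)) x = deriv (deriv f) (-x) := by
  rw [funext (deriv_comp_neg f), deriv.fun_neg, deriv_comp_neg, neg_neg]

noncomputable def potential (δ μ p x : ℝ) : ℝ := δ ^ 2 / 2 * x ^ 2 - μ / (2 * p) * x ^ (2 * p)

noncomputable def threshold (δ μ p : ℝ) : ℝ := (p * δ ^ 2 / μ) ^ (1 / (2 * p - 2))

/-- The paper's `f₁`, for a single component `w = w₁`. -/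
noncomputable def energy (δ μ p : ℝ) (w : ℝ → ℝ) (t : ℝ) : ℝ :=
  potential δ μ p (w t) - deriv w t ^ 2 / 2

lemma threshold_pos (hδ : 0 < δ) (hμ : 0 < μ) (hp : 0 < p) : 0 < threshold δ μ p :=
  Real.rpow_pos_of_pos (by positivity) _

lemma threshold_le_iff (hμ : 0 < μ) (hp : 1 < p) {x : ℝ} (hx : 0 ≤ x) :
    threshold δ μ p ≤ x ↔ p * δ ^ 2 / μ ≤ x ^ (2 * p - 2) := by
  have hp0 : 0 < p := by linarith
  rw [threshold, one_div]
  exact Real.rpow_inv_le_iff_of_pos (by positivity) hx (by linarith)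

lemma potential_nonpos_iff (hμ : 0 < μ) (hp : 1 < p) {x : ℝ} (hx : 0 < x) :
    potential δ μ p x ≤ 0 ↔ threshold δ μ p ≤ x := by
  have hp0 : 0 < p := by linarith
  have hfactor :
      potential δ μ p x = -(x ^ 2 / (2 * p) * (x ^ (2 * p - 2) * μ - p * δ ^ 2)) := by
    have : x ^ (2 * p) = x ^ (2 * p - 2) * x ^ 2 := by
      rw [← Real.rpow_natCast, ← Real.rpow_add hx]; norm_num
    rw [potential, this]; field_simp; ring
  rw [threshold_le_iff hμ hp hx.le, div_le_iff₀ hμ, hfactor,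
    neg_nonpos, mul_nonneg_iff_of_pos_left (by positivity), sub_nonneg]

lemma threshold_nonneg (hμ : 0 ≤ μ) (hp : 0 ≤ p) : 0 ≤ threshold δ μ p :=
  Real.rpow_nonneg (by positivity) _

lemma force_le_of_threshold_le (hμ : 0 < μ) (hp : 1 < p) {x : ℝ} (hx : threshold δ μ p ≤ x) :
    δ ^ 2 * x - μ * x ^ (2 * p - 1) ≤ -((p - 1) * δ ^ 2 * threshold δ μ p) := by
  have hx0 : 0 ≤ x := (threshold_nonneg hμ.le (by linarith)).trans hx
  have hpow := (threshold_le_iff hμ hp hx0).1 hx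
  rw [div_le_iff₀ hμ] at hpow
  have hsplit : x ^ (2 * p - 1) = x ^ (2 * p - 2) * x := by
    rw [← Real.rpow_add_one' hx0 (by linarith)]; ring_nf
  rw [hsplit]
  nlinarith [mul_le_mul_of_nonneg_right hpow hx0, mul_le_mul_of_nonneg_left hx
    (by nlinarith [sq_nonneg δ] : 0 ≤ (p - 1) * δ ^ 2)]

lemma hasDerivAt_energy (hp : 1 ≤ 2 * p) (hw : Differentiable ℝ w)
    (hw' : Differentiable ℝ (deriv w))
    (heq : ∀ t, deriv (deriv w) t = δ ^ 2 * w t - μ * w t ^ (2 * p - 1) - h t) (t : ℝ) :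
    HasDerivAt (energy δ μ p w) (h t * deriv w t) t := by
  have hw₁ := (hw t).hasDerivAt
  have hw₂ := (hw' t).hasDerivAt
  have hp0 : p ≠ 0 := by rintro rfl; norm_num at hp
  refine ((((hw₁.pow 2).const_mul (δ ^ 2 / 2)).sub
    ((hw₁.rpow_const (Or.inr hp)).const_mul (μ / (2 * p)))).sub
      ((hw₂.pow 2).div_const 2)).congr_deriv ?_
  rw [heq t]
  field_simp
  ring

lemma mul_threshold_pos (hδ : 0 < δ) (hμ : 0 < μ) (hp : 1 < p) :
    0 < (p - 1) * δ ^ 2 * threshold δ μ p := by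
  have := threshold_pos hδ hμ (by linarith : 0 < p)
  have : 0 < p - 1 := by linarith
  positivity

lemma deriv_deriv_le_of_threshold_le (hμ : 0 < μ) (hp : 1 < p) (hh : ∀ t, 0 ≤ h t)
    (heq : ∀ t, deriv (deriv w) t = δ ^ 2 * w t - μ * w t ^ (2 * p - 1) - h t) {t : ℝ}
    (ht : threshold δ μ p ≤ w t) : deriv (deriv w) t ≤ -((p - 1) * δ ^ 2 * threshold δ μ p) := by
  rw [heq t]
  linarith [force_le_of_threshold_le hμ hp ht, hh t]

lemma deriv_deriv_neg_of_threshold_le (hδ : 0 < δ) (hμ : 0 < μ) (hp : 1 < p)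
    (hh : ∀ t, 0 ≤ h t)
    (heq : ∀ t, deriv (deriv w) t = δ ^ 2 * w t - μ * w t ^ (2 * p - 1) - h t) {t : ℝ}
    (ht : threshold δ μ p ≤ w t) : deriv (deriv w) t < 0 :=
  (deriv_deriv_le_of_threshold_le hμ hp hh heq ht).trans_lt
    (neg_neg_of_pos (mul_threshold_pos hδ hμ hp))

lemma deriv_neg_of_energy_neg (hδ : 0 < δ) (hμ : 0 < μ) (hp : 1 < p) (hw : Differentiable ℝ w)
    (hw' : Differentiable ℝ (deriv w)) (hpos : ∀ t, 0 < w t) (hh : ∀ t, 0 ≤ h t)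
    (heq : ∀ t, deriv (deriv w) t = δ ^ 2 * w t - μ * w t ^ (2 * p - 1) - h t) {t₁ : ℝ}
    (hv : deriv w t₁ < 0) (hE : energy δ μ p w t₁ < 0) {t : ℝ} (ht : t₁ ≤ t) :
    deriv w t < 0 := by
  by_contra! hvt
  obtain ⟨c, hc, hvc, hneg⟩ := exists_zero_and_neg_on_Ico hw'.continuous.continuousOn hv ht hvt
  have hdE := hasDerivAt_energy (by linarith) hw hw' heq
  have hanti : AntitoneOn (energy δ μ p w) (Icc t₁ c) :=
    antitoneOn_of_hasDerivWithinAt_nonpos (convex_Icc t₁ c)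
      (fun t _ => (hdE t).continuousAt.continuousWithinAt) (fun t _ => (hdE t).hasDerivWithinAt)
      fun t ht => by
        rw [interior_Icc] at ht
        exact mul_nonpos_of_nonneg_of_nonpos (hh t) (hneg t ⟨ht.1.le, ht.2⟩).le
  have hEc : energy δ μ p w c < 0 :=
    (hanti (left_mem_Icc.2 hc.le) (right_mem_Icc.2 hc.le) hc.le).trans_lt hE
  have hwc : threshold δ μ p ≤ w c := by
    rw [← potential_nonpos_iff hμ hp (hpos c)]
    rw [energy, hvc] at hEc
    linarith
  obtain ⟨t', hvt', ht'⟩ := ((eventually_deriv_pos_left_and_neg_right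
    (deriv_deriv_neg_of_threshold_le hδ hμ hp hh heq hwc) hvc).1.and (Ico_mem_nhdsLT hc)).exists
  exact (hneg t' ht').not_gt hvt'

lemma exists_lt_threshold (hδ : 0 < δ) (hμ : 0 < μ) (hp : 1 < p)
    (hw' : Differentiable ℝ (deriv w)) (hbd : ∀ t, |deriv w t| ≤ M) (hh : ∀ t, 0 ≤ h t)
    (heq : ∀ t, deriv (deriv w) t = δ ^ 2 * w t - μ * w t ^ (2 * p - 1) - h t) (t₁ : ℝ) :
    ∃ t₂, t₁ ≤ t₂ ∧ w t₂ < threshold δ μ p := by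
  by_contra! hge
  obtain ⟨t, ht⟩ := exists_lt_of_deriv_le_neg hw' (mul_threshold_pos hδ hμ hp)
    (fun t ht => deriv_deriv_le_of_threshold_le hμ hp hh heq (hge t ht)) (-M)
  linarith [neg_abs_le (deriv w t), hbd t]

lemma energy_nonneg_of_deriv_neg (hδ : 0 < δ) (hμ : 0 < μ) (hp : 1 < p)
    (hw : Differentiable ℝ w) (hw' : Differentiable ℝ (deriv w)) (hpos : ∀ t, 0 < w t)
    (hbd : ∀ t, |deriv w t| ≤ M) (hh : ∀ t, 0 ≤ h t)
    (heq : ∀ t, deriv (deriv w) t = δ ^ 2 * w t - μ * w t ^ (2 * p - 1) - h t) {t₁ : ℝ}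
    (hv : deriv w t₁ < 0) : 0 ≤ energy δ μ p w t₁ := by
  by_contra! hE
  have hneg : ∀ t, t₁ ≤ t → deriv w t < 0 := fun t ht =>
    deriv_neg_of_energy_neg hδ hμ hp hw hw' hpos hh heq hv hE ht
  have hdE := hasDerivAt_energy (by linarith) hw hw' heq
  have hEanti : AntitoneOn (energy δ μ p w) (Ici t₁) :=
    antitoneOn_of_hasDerivWithinAt_nonpos (convex_Ici t₁)
      (fun t _ => (hdE t).continuousAt.continuousWithinAt) (fun t _ => (hdE t).hasDerivWithinAt)
      fun t ht => mul_nonpos_of_nonneg_of_nonpos (hh t) (hneg t (interior_subset ht)).le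
  have hwanti : AntitoneOn w (Ici t₁) :=
    antitoneOn_of_deriv_nonpos (convex_Ici t₁) hw.continuous.continuousOn hw.differentiableOn
      fun t ht => (hneg t (interior_subset ht)).le
  obtain ⟨t₂, ht₁₂, hwt₂⟩ := exists_lt_threshold hδ hμ hp hw' hbd hh heq t₁
  set s := √(-2 * energy δ μ p w t₁)
  have hs : 0 < s := Real.sqrt_pos.2 (by linarith)
  have hslope : ∀ t, t₂ ≤ t → deriv w t ≤ -s := by
    intro t ht
    have ht₁ : t₁ ≤ t := ht₁₂.trans ht
    have hF : 0 < potential δ μ p (w t) := by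
      rw [← not_le, potential_nonpos_iff hμ hp (hpos t), not_le]
      exact (hwanti ht₁₂ ht₁ ht).trans_lt hwt₂
    have hEt : energy δ μ p w t ≤ energy δ μ p w t₁ := hEanti self_mem_Ici ht₁ ht₁
    have habs : s ≤ |deriv w t| := by
      rw [← Real.sqrt_sq_eq_abs]
      exact Real.sqrt_le_sqrt
        (by linarith [show energy δ μ p w t = potential δ μ p (w t) - deriv w t ^ 2 / 2 from rfl])
    rw [abs_of_neg (hneg t ht₁)] at habs
    linarith
  obtain ⟨t, ht⟩ := exists_lt_of_deriv_le_neg hw hs hslope 0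
  exact (hpos t).not_gt ht

lemma lt_threshold_of_deriv_nonpos (hδ : 0 < δ) (hμ : 0 < μ) (hp : 1 < p)
    (hw : Differentiable ℝ w) (hw' : Differentiable ℝ (deriv w)) (hpos : ∀ t, 0 < w t)
    (hbd : ∀ t, |deriv w t| ≤ M) (hh : ∀ t, 0 < h t)
    (heq : ∀ t, deriv (deriv w) t = δ ^ 2 * w t - μ * w t ^ (2 * p - 1) - h t) {t₀ : ℝ}
    (hv : deriv w t₀ ≤ 0) : w t₀ < threshold δ μ p := by
  by_contra! hwt₀
  have hF := (potential_nonpos_iff hμ hp (hpos t₀)).2 hwt₀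
  have hh' : ∀ t, 0 ≤ h t := fun t => (hh t).le
  have hE : ∀ {t}, deriv w t < 0 → 0 ≤ energy δ μ p w t :=
    energy_nonneg_of_deriv_neg hδ hμ hp hw hw' hpos hbd hh' heq
  rcases hv.lt_or_eq with hv | hv
  · have := hE hv
    rw [energy] at this
    nlinarith
  · obtain ⟨t₁, ht₁, hneg⟩ := mem_nhdsGT_iff_exists_Ioc_subset.1
      (eventually_deriv_pos_left_and_neg_right
        (deriv_deriv_neg_of_threshold_le hδ hμ hp hh' heq hwt₀) hv).2
    have hdE := hasDerivAt_energy (by linarith) hw hw' heq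
    have hanti : StrictAntiOn (energy δ μ p w) (Icc t₀ t₁) :=
      strictAntiOn_of_hasDerivWithinAt_neg (convex_Icc t₀ t₁)
        (fun t _ => (hdE t).continuousAt.continuousWithinAt) (fun t _ => (hdE t).hasDerivWithinAt)
        fun t ht => by
          rw [interior_Icc] at ht
          exact mul_neg_of_pos_of_neg (hh t) (hneg ⟨ht.1, ht.2.le⟩)
    have hE₀ : energy δ μ p w t₀ = potential δ μ p (w t₀) := by simp [energy, hv]
    linarith [hanti (left_mem_Icc.2 (le_of_lt ht₁)) (right_mem_Icc.2 (le_of_lt ht₁)) ht₁,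
      hE (hneg ⟨ht₁, le_rfl⟩)]

theorem lt_threshold (hδ : 0 < δ) (hμ : 0 < μ) (hp : 1 < p)
    (hw : Differentiable ℝ w) (hw' : Differentiable ℝ (deriv w)) (hpos : ∀ t, 0 < w t)
    (hbd : ∀ t, |deriv w t| ≤ M) (hh : ∀ t, 0 < h t)
    (heq : ∀ t, deriv (deriv w) t = δ ^ 2 * w t - μ * w t ^ (2 * p - 1) - h t) (t : ℝ) :
    w t < threshold δ μ p := by
  rcases le_or_gt (deriv w t) 0 with hv | hv
  · exact lt_threshold_of_deriv_nonpos hδ hμ hp hw hw' hpos hbd hh heq hv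
  · have hd : deriv (fun s => w (-s)) = fun s => -deriv w (-s) := funext (deriv_comp_neg w)
    have := lt_threshold_of_deriv_nonpos (w := fun s => w (-s)) (h := fun s => h (-s)) (t₀ := -t)
      hδ hμ hp (hw.comp differentiable_neg) (hd ▸ (hw'.comp differentiable_neg).neg)
      (fun s => hpos (-s)) (fun s => by simpa [hd] using hbd (-s)) (fun s => hh (-s))
      (fun s => by rw [deriv_deriv_comp_neg, heq]) (by simpa [hd] using hv.le)
    simpa using this

end CoupledSystem

theorem stmt_3_general (δ μ₁ μ₂ β p : ℝ) (hδ : 0 < δ) (hμ₁ : 0 < μ₁) (hμ₂ : 0 < μ₂)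
    (hβ : 0 < β) (hp : 1 < p) (w₁ w₂ : ℝ → ℝ)
    (hw₁ : ContDiff ℝ 2 w₁) (hw₂ : ContDiff ℝ 2 w₂)
    (hpos₁ : ∀ t, 0 < w₁ t) (hpos₂ : ∀ t, 0 < w₂ t)
    (hbd : ∃ M, ∀ t, w₁ t ≤ M ∧ w₂ t ≤ M ∧ |deriv w₁ t| ≤ M ∧ |deriv w₂ t| ≤ M)
    (heq₁ : ∀ t, deriv (deriv w₁) t - δ^2 * w₁ t + μ₁ * w₁ t ^ (2*p - 1)
      + β * w₁ t ^ (p - 1) * w₂ t ^ p = 0)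
    (heq₂ : ∀ t, deriv (deriv w₂) t - δ^2 * w₂ t + μ₂ * w₂ t ^ (2*p - 1)
      + β * w₂ t ^ (p - 1) * w₁ t ^ p = 0) :
    ∀ t : ℝ, w₁ t < (p * δ^2 / μ₁) ^ (1/(2*p - 2)) ∧ w₂ t < (p * δ^2 / μ₂) ^ (1/(2*p - 2)) := by
  obtain ⟨M, hM⟩ := hbd
  have hcoupling : ∀ {u v : ℝ → ℝ}, (∀ t, 0 < u t) → (∀ t, 0 < v t) →
      ∀ t, 0 < β * u t ^ (p - 1) * v t ^ p := fun hu hv t => by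
    have := hu t
    have := hv t
    positivity
  intro t
  exact ⟨CoupledSystem.lt_threshold hδ hμ₁ hp (hw₁.differentiable (by norm_num))
      hw₁.differentiable_deriv_two hpos₁ (fun t => (hM t).2.2.1) (hcoupling hpos₁ hpos₂)
      (fun t => by linarith [heq₁ t]) t,
    CoupledSystem.lt_threshold hδ hμ₂ hp (hw₂.differentiable (by norm_num))
      hw₂.differentiable_deriv_two hpos₂ (fun t => (hM t).2.2.2) (hcoupling hpos₂ hpos₁)
      (fun t => by linarith [heq₂ t]) t⟩

theorem stmt_3 (δ μ₁ μ₂ β p K : ℝ) (hδ : 0 < δ) (hμ₁ : 0 < μ₁) (hμ₂ : 0 < μ₂)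
    (hβ : 0 < β) (hp : 1 < p) (hK : 0 ≤ K) (w₁ w₂ : ℝ → ℝ)
    (hw₁ : ContDiff ℝ 2 w₁) (hw₂ : ContDiff ℝ 2 w₂)
    (hpos₁ : ∀ t, 0 < w₁ t) (hpos₂ : ∀ t, 0 < w₂ t)
    (hbd : ∃ M, ∀ t, w₁ t ≤ M ∧ w₂ t ≤ M ∧ |deriv w₁ t| ≤ M ∧ |deriv w₂ t| ≤ M)
    (heq₁ : ∀ t, deriv (deriv w₁) t - δ^2 * w₁ t + μ₁ * w₁ t ^ (2*p - 1)
      + β * w₁ t ^ (p - 1) * w₂ t ^ p = 0)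
    (heq₂ : ∀ t, deriv (deriv w₂) t - δ^2 * w₂ t + μ₂ * w₂ t ^ (2*p - 1)
      + β * w₂ t ^ (p - 1) * w₁ t ^ p = 0)
    (hΨ : ∀ t, (1/2) * ((deriv w₁ t)^2 + (deriv w₂ t)^2 - δ^2 * (w₁ t)^2 - δ^2 * (w₂ t)^2)
      + (1/(2*p)) * (μ₁ * w₁ t ^ (2*p) + 2*β * w₁ t ^ p * w₂ t ^ p + μ₂ * w₂ t ^ (2*p)) = K) :
    ∀ t : ℝ, w₁ t < (p * δ^2 / μ₁) ^ (1/(2*p - 2)) ∧ w₂ t < (p * δ^2 / μ₂) ^ (1/(2*p - 2)) :=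
  stmt_3_general δ μ₁ μ₂ β p hδ hμ₁ hμ₂ hβ hp w₁ w₂ hw₁ hw₂ hpos₁ hpos₂ hbd heq₁ heq₂
end

section
/- Let δ, μ₁, μ₂, β > 0, p > 1, and (w₁, w₂) a positive bounded C² solution on ℝ of the coupled system w₁'' - δ²w₁ + μ₁w₁^{2p-1} + βw₁^{p-1}w₂^p = 0, w₂'' - δ²w₂ + μ₂w₂^{2p-1} + βw₂^{p-1}w₁^p = 0 with constant energy Ψ ≡ K ≥ 0, and assume w₁(t) < (pδ²/μ₁)^{1/(2p-2)} and w₂(t) < (pδ²/μ₂)^{1/(2p-2)} for all t. Then, with fᵢ(t) = -½wᵢ'(t)² + (δ²/2)wᵢ(t)² - (μᵢ/(2p))wᵢ(t)^{2p}, one has f₁(t) > 0 and f₂(t) > 0 for all t ∈ ℝ; in particular |wᵢ'(t)| < δ wᵢ(t) for all t and i = 1,2. -/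
/-!
Write `f = localEnergy δ μ p w`. Along the system, `f' = w' · β w^(p-1) v^p`, so `f` increases
exactly where `w` does, and below the threshold `f + w'²/2 = (δ²/2) w² - (μ/(2p)) w^(2p) > 0`.
Suppose `f(t₀) ≤ 0` and, by time reversal, `w'(t₀) > 0`. At a last zero `z < t₀` of `w'` we would
have `0 < f(z) ≤ f(t₀)`, so `w' > 0` on `(-∞, t₀]` and `f(ξ) ≤ f(t₀ - 1) < 0` for `ξ ≤ t₀ - 1`.
Then `w'(ξ)² > -2 f(t₀ - 1)` there, but an increasing function bounded below cannot keep its slope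
away from `0` as `ξ → -∞`.
-/

open Real Set

section

variable {w f c : ℝ → ℝ}

lemma exists_le_deriv_lt_of_bddBelow (hw : Differentiable ℝ w) (hb : BddBelow (range w))
    (a : ℝ) {ε : ℝ} (hε : 0 < ε) : ∃ ξ ≤ a, deriv w ξ < ε := by
  by_contra! h
  obtain ⟨m, hm⟩ := hb
  set s := a - (w a - m) / ε - 1
  have hs : s ≤ a := by
    have : m ≤ w a := hm ⟨a, rfl⟩
    have : 0 ≤ (w a - m) / ε := div_nonneg (by linarith) hε.le
    linarith
  have hgrowth : ε * (a - s) ≤ w a - w s :=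
    (convex_Iic a).mul_sub_le_image_sub_of_le_deriv hw.continuous.continuousOn
      hw.differentiableOn (fun x hx => h x (interior_subset (s := Iic a) hx)) s hs a self_mem_Iic hs
  have hslope : ε * (a - s) = w a - m + ε := by
    simp only [s]
    field_simp
    ring
  linarith [hm ⟨s, rfl⟩]

variable (hf : ∀ t, HasDerivAt f (deriv w t * c t) t) (hc : ∀ t, 0 < c t)
include hf hc

lemma monotoneOn_of_hasDerivAt_deriv_mul {D : Set ℝ} (hD : Convex ℝ D)
    (hw : ∀ t ∈ interior D, 0 ≤ deriv w t) : MonotoneOn f D :=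
  monotoneOn_of_deriv_nonneg hD (fun t _ => (hf t).continuousAt.continuousWithinAt)
    (fun t _ => (hf t).differentiableAt.differentiableWithinAt)
    fun t ht => (hf t).deriv ▸ mul_nonneg (hw t ht) (hc t).le

lemma strictMonoOn_of_hasDerivAt_deriv_mul {D : Set ℝ} (hD : Convex ℝ D)
    (hw : ∀ t ∈ interior D, 0 < deriv w t) : StrictMonoOn f D :=
  strictMonoOn_of_deriv_pos hD (fun t _ => (hf t).continuousAt.continuousWithinAt)
    fun t ht => (hf t).deriv ▸ mul_pos (hw t ht) (hc t)

variable (hlow : ∀ t, -(1/2) * deriv w t ^ 2 < f t)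
include hlow

lemma deriv_pos_of_le_of_nonpos (hw' : Continuous (deriv w)) {t₀ : ℝ}
    (hd : 0 < deriv w t₀) (hf₀ : f t₀ ≤ 0) : ∀ t ≤ t₀, 0 < deriv w t := by
  by_contra! h
  obtain ⟨t₁, ht₁, hd₁⟩ := h
  set S := Icc t₁ t₀ ∩ {t | deriv w t ≤ 0}
  have hSc : IsClosed S := isClosed_Icc.inter (isClosed_le hw' continuous_const)
  have hSbdd : BddAbove S := ⟨t₀, fun _ hx => hx.1.2⟩
  set z := sSup S
  have hzS : z ∈ S := hSc.csSup_mem ⟨t₁, ⟨le_rfl, ht₁⟩, hd₁⟩ hSbdd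
  have hz₀ : z ≤ t₀ := hzS.1.2
  have hdz : deriv w z ≤ 0 := hzS.2
  have ht₁z : t₁ ≤ z := le_csSup hSbdd ⟨⟨le_rfl, ht₁⟩, hd₁⟩
  have hpos_after : ∀ s ∈ Ioc z t₀, 0 < deriv w s := by
    rintro s ⟨hzs, hst₀⟩
    by_contra! hs
    exact (le_csSup hSbdd ⟨⟨ht₁z.trans hzs.le, hst₀⟩, hs⟩).not_gt hzs
  have hfz : f z ≤ 0 :=
    (monotoneOn_of_hasDerivAt_deriv_mul hf hc (convex_Icc z t₀)
      (fun t ht => (hpos_after t (Ioo_subset_Ioc_self (by rwa [interior_Icc] at ht))).le)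
      ⟨le_rfl, hz₀⟩ ⟨hz₀, le_rfl⟩ hz₀).trans hf₀
  -- `f z ≤ 0` forces `deriv w z ≠ 0`, so `deriv w` changes sign on `(z, t₀)`
  have hdz' : deriv w z < 0 := hdz.lt_of_ne fun h0 => by linarith [h0 ▸ hlow z]
  obtain ⟨s, hs, hs0⟩ := intermediate_value_Ioo hz₀ hw'.continuousOn ⟨hdz', hd⟩
  exact (hpos_after s (Ioo_subset_Ioc_self hs)).ne' hs0

lemma pos_of_deriv_pos (hw : Differentiable ℝ w) (hw' : Continuous (deriv w))
    (hb : BddBelow (range w)) {t₀ : ℝ} (hd : 0 < deriv w t₀) : 0 < f t₀ := by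
  by_contra! hf₀
  have hpos := deriv_pos_of_le_of_nonpos hf hc hlow hw' hd hf₀
  have hmono : MonotoneOn f (Iic t₀) :=
    monotoneOn_of_hasDerivAt_deriv_mul hf hc (convex_Iic t₀)
      fun t ht => (hpos t (interior_subset (s := Iic t₀) ht)).le
  have hf₁ : f (t₀ - 1) < 0 :=
    (strictMonoOn_of_hasDerivAt_deriv_mul hf hc (convex_Iic t₀)
      (fun t ht => hpos t (interior_subset (s := Iic t₀) ht)) (by simp) self_mem_Iic
      (by linarith)).trans_le hf₀
  obtain ⟨ξ, hξ, hdξ⟩ := exists_le_deriv_lt_of_bddBelow hw hb (t₀ - 1)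
    (sqrt_pos.2 (by linarith : 0 < -2 * f (t₀ - 1)))
  have hsq : deriv w ξ ^ 2 < -2 * f (t₀ - 1) :=
    (lt_sqrt (hpos ξ (by linarith)).le).1 hdξ
  have hfξ : f ξ ≤ f (t₀ - 1) := hmono (by simp; linarith) (by simp) hξ
  linarith [hlow ξ]

lemma pos_of_hasDerivAt_deriv_mul (hw : Differentiable ℝ w) (hw' : Continuous (deriv w))
    (hb : BddBelow (range w)) (t : ℝ) : 0 < f t := by
  rcases lt_trichotomy (deriv w t) 0 with hd | hd | hd
  · -- time reversal `t ↦ -t`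
    have hderiv_neg : deriv (fun s => w (-s)) = fun s => -deriv w (-s) :=
      funext fun s => deriv_comp_neg w s
    have hrefl := pos_of_deriv_pos (w := fun s => w (-s)) (f := fun s => f (-s))
      (c := fun s => c (-s)) (fun s => ?_) (fun s => hc (-s)) (fun s => ?_)
      (hw.comp differentiable_neg) ?_
      (hb.mono (range_subset_iff.2 fun s => mem_range_self (-s)))
      (t₀ := -t) ?_
    · simpa using hrefl
    · rw [hderiv_neg]
      exact ((hf (-s)).comp s (hasDerivAt_neg s)).congr_deriv (by ring)
    · simpa [hderiv_neg] using hlow (-s)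
    · rw [hderiv_neg]
      exact (hw'.comp continuous_neg).neg
    · simpa [hderiv_neg] using hd
  · linarith [hd ▸ hlow t]
  · exact pos_of_deriv_pos hf hc hlow hw hw' hb hd

end

/-- The paper's `fᵢ`, for the component `w = wᵢ` with self-interaction `μ = μᵢ`. -/
noncomputable def localEnergy (δ μ p : ℝ) (w : ℝ → ℝ) (t : ℝ) : ℝ :=
  -(1/2) * (deriv w t)^2 + (δ^2/2) * (w t)^2 - (μ/(2*p)) * w t ^ (2*p)

lemma hasDerivAt_localEnergy {δ μ p t : ℝ} {w g : ℝ → ℝ} (hp : 1 ≤ 2 * p)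
    (hw : ContDiff ℝ 2 w)
    (hode : deriv (deriv w) t - δ^2 * w t + μ * w t ^ (2*p - 1) + g t = 0) :
    HasDerivAt (localEnergy δ μ p w) (deriv w t * g t) t := by
  have hw₁ : HasDerivAt w (deriv w t) t := (hw.differentiable (by norm_num) t).hasDerivAt
  have hw₂ : HasDerivAt (deriv w) (deriv (deriv w) t) t :=
    (hw.differentiable_deriv_two t).hasDerivAt
  have hp₀ : p ≠ 0 := by linarith
  refine ((((hw₂.pow 2).const_mul (-(1/2))).add ((hw₁.pow 2).const_mul (δ^2/2))).sub
    ((hw₁.rpow_const (Or.inr hp)).const_mul (μ/(2*p)))).congr_deriv ?_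
  rw [show deriv (deriv w) t = δ^2 * w t - μ * w t ^ (2*p - 1) - g t by linarith]
  field_simp
  ring

lemma mul_rpow_lt_mul_sq_of_lt_rpow {δ μ p x : ℝ} (hμ : 0 < μ) (hp : 1 < p) (hx₀ : 0 < x)
    (hx : x < (p * δ^2 / μ) ^ (1/(2*p - 2))) :
    (μ/(2*p)) * x ^ (2*p) < (δ^2/2) * x^2 := by
  have hexp : 0 < 2*p - 2 := by linarith
  have hx' : x ^ (2*p - 2) < p * δ^2 / μ :=
    (lt_rpow_inv_iff_of_pos hx₀.le (by positivity) hexp).1 (by rwa [one_div] at hx)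
  have hsplit : x ^ (2*p) = x ^ (2*p - 2) * x^2 := by
    rw [← rpow_natCast, ← rpow_add hx₀]
    norm_num
  calc (μ/(2*p)) * x ^ (2*p) = (μ/(2*p)) * x ^ (2*p - 2) * x^2 := by rw [hsplit, mul_assoc]
    _ < (μ/(2*p)) * (p * δ^2 / μ) * x^2 := by gcongr
    _ = (δ^2/2) * x^2 := by field_simp

lemma abs_deriv_lt_of_localEnergy_pos {δ μ p t : ℝ} {w : ℝ → ℝ} (hδ : 0 ≤ δ) (hμ : 0 ≤ μ)
    (hp : 0 ≤ p) (hw : 0 ≤ w t) (h : 0 < localEnergy δ μ p w t) : |deriv w t| < δ * w t := by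
  have hrpow : 0 ≤ (μ/(2*p)) * w t ^ (2*p) := by positivity
  refine abs_lt_of_sq_lt_sq ?_ (by positivity)
  unfold localEnergy at h
  nlinarith

lemma localEnergy_pos {δ μ β p : ℝ} {w v : ℝ → ℝ} (hμ : 0 < μ) (hβ : 0 < β) (hp : 1 < p)
    (hw : ContDiff ℝ 2 w) (hwpos : ∀ t, 0 < w t) (hvpos : ∀ t, 0 < v t)
    (hode : ∀ t, deriv (deriv w) t - δ^2 * w t + μ * w t ^ (2*p - 1)
      + β * w t ^ (p - 1) * v t ^ p = 0)
    (hless : ∀ t, w t < (p * δ^2 / μ) ^ (1/(2*p - 2))) (t : ℝ) :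
    0 < localEnergy δ μ p w t :=
  pos_of_hasDerivAt_deriv_mul
    (fun t => hasDerivAt_localEnergy (g := fun s => β * w s ^ (p - 1) * v s ^ p) (by linarith) hw
      (hode t))
    (fun t => by have := hwpos t; have := hvpos t; positivity)
    (fun t => by
      have := mul_rpow_lt_mul_sq_of_lt_rpow hμ hp (hwpos t) (hless t)
      unfold localEnergy
      linarith)
    (hw.differentiable (by norm_num)) (hw.continuous_deriv (by norm_num))
    ⟨0, forall_mem_range.2 fun t => (hwpos t).le⟩ t

theorem stmt_4_general (δ μ₁ μ₂ β p : ℝ) (hδ : 0 < δ) (hμ₁ : 0 < μ₁) (hμ₂ : 0 < μ₂)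
    (hβ : 0 < β) (hp : 1 < p) (w₁ w₂ : ℝ → ℝ)
    (hw₁ : ContDiff ℝ 2 w₁) (hw₂ : ContDiff ℝ 2 w₂)
    (hpos₁ : ∀ t, 0 < w₁ t) (hpos₂ : ∀ t, 0 < w₂ t)
    (heq₁ : ∀ t, deriv (deriv w₁) t - δ^2 * w₁ t + μ₁ * w₁ t ^ (2*p - 1)
      + β * w₁ t ^ (p - 1) * w₂ t ^ p = 0)
    (heq₂ : ∀ t, deriv (deriv w₂) t - δ^2 * w₂ t + μ₂ * w₂ t ^ (2*p - 1)
      + β * w₂ t ^ (p - 1) * w₁ t ^ p = 0)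
    (hless₁ : ∀ t, w₁ t < (p * δ^2 / μ₁) ^ (1/(2*p - 2)))
    (hless₂ : ∀ t, w₂ t < (p * δ^2 / μ₂) ^ (1/(2*p - 2))) :
    ∀ t : ℝ,
      0 < -(1/2) * (deriv w₁ t)^2 + (δ^2/2) * (w₁ t)^2 - (μ₁/(2*p)) * w₁ t ^ (2*p) ∧
      0 < -(1/2) * (deriv w₂ t)^2 + (δ^2/2) * (w₂ t)^2 - (μ₂/(2*p)) * w₂ t ^ (2*p) ∧
      |deriv w₁ t| < δ * w₁ t ∧ |deriv w₂ t| < δ * w₂ t := by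
  intro t
  have h₁ : 0 < localEnergy δ μ₁ p w₁ t := localEnergy_pos hμ₁ hβ hp hw₁ hpos₁ hpos₂ heq₁ hless₁ t
  have h₂ : 0 < localEnergy δ μ₂ p w₂ t := localEnergy_pos hμ₂ hβ hp hw₂ hpos₂ hpos₁ heq₂ hless₂ t
  exact ⟨h₁, h₂,
    abs_deriv_lt_of_localEnergy_pos hδ.le hμ₁.le (by linarith) (hpos₁ t).le h₁,
    abs_deriv_lt_of_localEnergy_pos hδ.le hμ₂.le (by linarith) (hpos₂ t).le h₂⟩

theorem stmt_4 (δ μ₁ μ₂ β p K : ℝ) (hδ : 0 < δ) (hμ₁ : 0 < μ₁) (hμ₂ : 0 < μ₂)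
    (hβ : 0 < β) (hp : 1 < p) (hK : 0 ≤ K) (w₁ w₂ : ℝ → ℝ)
    (hw₁ : ContDiff ℝ 2 w₁) (hw₂ : ContDiff ℝ 2 w₂)
    (hpos₁ : ∀ t, 0 < w₁ t) (hpos₂ : ∀ t, 0 < w₂ t)
    (hbd : ∃ M, ∀ t, w₁ t ≤ M ∧ w₂ t ≤ M)
    (heq₁ : ∀ t, deriv (deriv w₁) t - δ^2 * w₁ t + μ₁ * w₁ t ^ (2*p - 1)
      + β * w₁ t ^ (p - 1) * w₂ t ^ p = 0)
    (heq₂ : ∀ t, deriv (deriv w₂) t - δ^2 * w₂ t + μ₂ * w₂ t ^ (2*p - 1)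
      + β * w₂ t ^ (p - 1) * w₁ t ^ p = 0)
    (hΨ : ∀ t, (1/2) * ((deriv w₁ t)^2 + (deriv w₂ t)^2 - δ^2 * (w₁ t)^2 - δ^2 * (w₂ t)^2)
      + (1/(2*p)) * (μ₁ * w₁ t ^ (2*p) + 2*β * w₁ t ^ p * w₂ t ^ p + μ₂ * w₂ t ^ (2*p)) = K)
    (hless₁ : ∀ t, w₁ t < (p * δ^2 / μ₁) ^ (1/(2*p - 2)))
    (hless₂ : ∀ t, w₂ t < (p * δ^2 / μ₂) ^ (1/(2*p - 2))) :
    ∀ t : ℝ,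
      0 < -(1/2) * (deriv w₁ t)^2 + (δ^2/2) * (w₁ t)^2 - (μ₁/(2*p)) * w₁ t ^ (2*p) ∧
      0 < -(1/2) * (deriv w₂ t)^2 + (δ^2/2) * (w₂ t)^2 - (μ₂/(2*p)) * w₂ t ^ (2*p) ∧
      |deriv w₁ t| < δ * w₁ t ∧ |deriv w₂ t| < δ * w₂ t :=
  stmt_4_general δ μ₁ μ₂ β p hδ hμ₁ hμ₂ hβ hp w₁ w₂ hw₁ hw₂ hpos₁ hpos₂ heq₁ heq₂ hless₁ hless₂
end

section
/- Let δ, μ₁, μ₂, β > 0, N ≥ 5, p = N/(N-2) (so 1 < p < 2), and (w₁, w₂) a positive C² solution on ℝ of w₁'' - δ²w₁ + μ₁w₁^{2p-1} + βw₁^{p-1}w₂^p = 0, w₂'' - δ²w₂ + μ₂w₂^{2p-1} + βw₂^{p-1}w₁^p = 0 with constant energy Ψ ≡ K ≥ 0 such that f₁, f₂ > 0 on ℝ (where fᵢ(t) = -½wᵢ'² + (δ²/2)wᵢ² - (μᵢ/(2p))wᵢ^{2p}). If t₀ is a local minimum point of w₁, then w₁(t₀) < (δ²/μ₁)^{1/(2p-2)}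 and f₂(t₀) < ((N-4)/N)·f₁(t₀). -/
/-!
At a local minimum `t₀` of `w₁` we have `w₁' = 0` and `w₁'' ≥ 0`, so the equation for `w₁`
gives `μ₁ w₁^{2p} + β w₁^p w₂^p ≤ δ² w₁²` at `t₀`. Since the coupling term is positive, this
bounds `w₁(t₀)`. For the second claim, the conservation of energy reads
`f₁ + f₂ = (β/p) w₁^p w₂^p - K`, and `(N-4)/N = 2/p - 1`, so it suffices that
`(β/p) w₁^p w₂^p < (2/p) f₁(t₀)`, which follows from the same inequality because `p > 1`.
-/

open Filter Topology

theorem IsLocalMin.deriv_deriv_nonneg {f : ℝ → ℝ} {x₀ : ℝ} (h : IsLocalMin f x₀)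
    (hc : ContinuousAt f x₀) : 0 ≤ deriv (deriv f) x₀ := by
  by_contra! hneg
  have hmax : IsLocalMax f x₀ := isLocalMax_of_deriv_deriv_neg hneg h.deriv_eq_zero hc
  have hconst : f =ᶠ[𝓝 x₀] fun _ ↦ f x₀ :=
    (h.and hmax).mono fun _ hx ↦ le_antisymm hx.2 hx.1
  have hderiv : deriv f =ᶠ[𝓝 x₀] fun _ ↦ 0 := by
    filter_upwards [hconst.eventuallyEq_nhds] with x hx
    rw [hx.deriv_eq, deriv_const]
  rw [hderiv.deriv_eq, deriv_const] at hneg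
  exact lt_irrefl 0 hneg

namespace Real

theorem mul_rpow_add_le_of_deriv_deriv_nonneg {x y u δ μ β p : ℝ} (hx : 0 < x) (hu : 0 ≤ u)
    (h : u - δ ^ 2 * x + μ * x ^ (2 * p - 1) + β * x ^ (p - 1) * y ^ p = 0) :
    μ * x ^ (2 * p) + β * x ^ p * y ^ p ≤ δ ^ 2 * x ^ 2 := by
  rw [rpow_sub_one hx.ne', rpow_sub_one hx.ne'] at h
  calc μ * x ^ (2 * p) + β * x ^ p * y ^ p
      = x * (μ * (x ^ (2 * p) / x) + β * (x ^ p / x) * y ^ p) := by field_simp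
    _ ≤ x * (δ ^ 2 * x) := mul_le_mul_of_nonneg_left (by linarith) hx.le
    _ = δ ^ 2 * x ^ 2 := by ring

theorem lt_rpow_of_mul_rpow_lt {x μ c p : ℝ} (hx : 0 < x) (hμ : 0 < μ) (hp : 1 < p)
    (h : μ * x ^ (2 * p) < c * x ^ 2) : x < (c / μ) ^ (1 / (2 * p - 2)) := by
  have hx2 : x ^ (2 * p - 2) = x ^ (2 * p) / x ^ 2 := by
    rw [rpow_sub hx, rpow_two]
  have hlt : μ * x ^ (2 * p - 2) < c := by
    rw [hx2, mul_div_assoc', div_lt_iff₀ (by positivity)]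
    exact h
  have hc : 0 < c := lt_of_le_of_lt (by positivity) hlt
  rw [one_div, lt_rpow_inv_iff_of_pos hx.le (by positivity) (by linarith), lt_div_iff₀ hμ]
  linarith

end Real

theorem div_mul_lt_two_div_mul_of_add_le {x A C δ μ β p : ℝ} (hp : 1 < p) (hμ : 0 < μ)
    (hA : 0 < A) (h : μ * A + β * C ≤ δ ^ 2 * x ^ 2) :
    β / p * C < 2 / p * (δ ^ 2 / 2 * x ^ 2 - μ / (2 * p) * A) := by
  have hp0 : 0 < p := by linarith
  have hgap : 0 < μ * A * (p - 1) / p ^ 2 := by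
    have : 0 < p - 1 := by linarith
    positivity
  calc β / p * C < β / p * C + μ * A * (p - 1) / p ^ 2 := by linarith
    _ = (μ * A + β * C) / p - μ * A / p ^ 2 := by field_simp; ring
    _ ≤ δ ^ 2 * x ^ 2 / p - μ * A / p ^ 2 := by gcongr
    _ = 2 / p * (δ ^ 2 / 2 * x ^ 2 - μ / (2 * p) * A) := by field_simp

theorem sub_four_div_eq_two_div_sub_one {n : ℝ} (hn : 2 < n) :
    (n - 4) / n = 2 / (n / (n - 2)) - 1 := by
  have : n - 2 ≠ 0 := by linarith
  have : n ≠ 0 := by linarith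
  field_simp
  ring

theorem stmt_8_general (N : ℕ) (hN : 5 ≤ N) (δ μ₁ μ₂ β p K : ℝ)
    (hμ₁ : 0 < μ₁) (hβ : 0 < β)
    (hp : p = (N : ℝ) / ((N : ℝ) - 2)) (hK : 0 ≤ K) (w₁ w₂ : ℝ → ℝ)
    (hw₁ : ContDiff ℝ 2 w₁)
    (hpos₁ : ∀ t, 0 < w₁ t) (hpos₂ : ∀ t, 0 < w₂ t)
    (heq₁ : ∀ t, deriv (deriv w₁) t - δ^2 * w₁ t + μ₁ * w₁ t ^ (2*p - 1)
      + β * w₁ t ^ (p - 1) * w₂ t ^ p = 0)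
    (hΨ : ∀ t, (1/2) * ((deriv w₁ t)^2 + (deriv w₂ t)^2 - δ^2 * (w₁ t)^2 - δ^2 * (w₂ t)^2)
      + (1/(2*p)) * (μ₁ * w₁ t ^ (2*p) + 2*β * w₁ t ^ p * w₂ t ^ p + μ₂ * w₂ t ^ (2*p)) = K)
    (t₀ : ℝ) (hmin : IsLocalMin w₁ t₀) :
    w₁ t₀ < (δ^2 / μ₁) ^ (1/(2*p - 2)) ∧
    (-(1/2) * (deriv w₂ t₀)^2 + (δ^2/2) * (w₂ t₀)^2 - (μ₂/(2*p)) * w₂ t₀ ^ (2*p))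
      < (((N : ℝ) - 4) / (N : ℝ)) *
        (-(1/2) * (deriv w₁ t₀)^2 + (δ^2/2) * (w₁ t₀)^2 - (μ₁/(2*p)) * w₁ t₀ ^ (2*p)) := by
  have hN2 : (2 : ℝ) < N := by exact_mod_cast (show 2 < N by omega)
  have hp1 : 1 < p := by rw [hp, one_lt_div (by linarith)]; linarith
  have hbound : μ₁ * w₁ t₀ ^ (2*p) + β * w₁ t₀ ^ p * w₂ t₀ ^ p ≤ δ^2 * w₁ t₀ ^ 2 :=
    Real.mul_rpow_add_le_of_deriv_deriv_nonneg (hpos₁ t₀)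
      (hmin.deriv_deriv_nonneg hw₁.continuous.continuousAt) (heq₁ t₀)
  have hcoupling : 0 < β * w₁ t₀ ^ p * w₂ t₀ ^ p := by
    have := hpos₁ t₀; have := hpos₂ t₀; positivity
  refine ⟨Real.lt_rpow_of_mul_rpow_lt (hpos₁ t₀) hμ₁ hp1 (by linarith), ?_⟩
  have henergy : (-(1/2) * (deriv w₂ t₀)^2 + (δ^2/2) * (w₂ t₀)^2 - (μ₂/(2*p)) * w₂ t₀ ^ (2*p))
      + (-(1/2) * (deriv w₁ t₀)^2 + (δ^2/2) * (w₁ t₀)^2 - (μ₁/(2*p)) * w₁ t₀ ^ (2*p))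
      = β / p * (w₁ t₀ ^ p * w₂ t₀ ^ p) - K := by
    rw [← hΨ t₀]; ring
  have hcore := div_mul_lt_two_div_mul_of_add_le hp1 hμ₁
    (Real.rpow_pos_of_pos (hpos₁ t₀) (2 * p)) (by rw [← mul_assoc]; exact hbound)
  rw [sub_four_div_eq_two_div_sub_one hN2, ← hp, hmin.deriv_eq_zero]
  rw [hmin.deriv_eq_zero] at henergy
  linear_combination hcore + henergy + hK

theorem stmt_8 (N : ℕ) (hN : 5 ≤ N) (δ μ₁ μ₂ β p K : ℝ)
    (hδ : 0 < δ) (hμ₁ : 0 < μ₁) (hμ₂ : 0 < μ₂) (hβ : 0 < β)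
    (hp : p = (N : ℝ) / ((N : ℝ) - 2)) (hK : 0 ≤ K) (w₁ w₂ : ℝ → ℝ)
    (hw₁ : ContDiff ℝ 2 w₁) (hw₂ : ContDiff ℝ 2 w₂)
    (hpos₁ : ∀ t, 0 < w₁ t) (hpos₂ : ∀ t, 0 < w₂ t)
    (heq₁ : ∀ t, deriv (deriv w₁) t - δ^2 * w₁ t + μ₁ * w₁ t ^ (2*p - 1)
      + β * w₁ t ^ (p - 1) * w₂ t ^ p = 0)
    (heq₂ : ∀ t, deriv (deriv w₂) t - δ^2 * w₂ t + μ₂ * w₂ t ^ (2*p - 1)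
      + β * w₂ t ^ (p - 1) * w₁ t ^ p = 0)
    (hΨ : ∀ t, (1/2) * ((deriv w₁ t)^2 + (deriv w₂ t)^2 - δ^2 * (w₁ t)^2 - δ^2 * (w₂ t)^2)
      + (1/(2*p)) * (μ₁ * w₁ t ^ (2*p) + 2*β * w₁ t ^ p * w₂ t ^ p + μ₂ * w₂ t ^ (2*p)) = K)
    (hf₁ : ∀ t, 0 < -(1/2) * (deriv w₁ t)^2 + (δ^2/2) * (w₁ t)^2 - (μ₁/(2*p)) * w₁ t ^ (2*p))
    (hf₂ : ∀ t, 0 < -(1/2) * (deriv w₂ t)^2 + (δ^2/2) * (w₂ t)^2 - (μ₂/(2*p)) * w₂ t ^ (2*p))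
    (t₀ : ℝ) (hmin : IsLocalMin w₁ t₀) :
    w₁ t₀ < (δ^2 / μ₁) ^ (1/(2*p - 2)) ∧
    (-(1/2) * (deriv w₂ t₀)^2 + (δ^2/2) * (w₂ t₀)^2 - (μ₂/(2*p)) * w₂ t₀ ^ (2*p))
      < (((N : ℝ) - 4) / (N : ℝ)) *
        (-(1/2) * (deriv w₁ t₀)^2 + (δ^2/2) * (w₁ t₀)^2 - (μ₁/(2*p)) * w₁ t₀ ^ (2*p)) :=
  stmt_8_general N hN δ μ₁ μ₂ β p K hμ₁ hβ hp hK w₁ w₂ hw₁ hpos₁ hpos₂ heq₁ hΨ t₀ hmin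
end

section
/- Let δ, A > 0 with A > 0, p > 1, and let V: [0,∞) → ℝ be a C² function with V(0) = 1, V'(0) = 0, V(t) ≥ 1 for all t ≥ 0, satisfying V'' - δ²V + A e^{-pδt}V^{p-1} = 0 on [0,∞). Define H(t) = ½V'(t)² - (δ²/2)V(t)² + (A/p)e^{-pδt}V(t)^p. If H(t) ≥ 0 for all t ≥ 0, then a contradiction follows; i.e., there is no such V with H ≥ 0 on [0,∞). -/
/-!
Write `u = e^{-δt} (V' + δV)`. The equation gives `u' = -A e^{-(1+p)δt} V^{p-1} < 0` and
`(e^{δt} V)' = e^{2δt} u`. If `u` ever became negative, `e^{δt} V` would eventually decrease at a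
fixed rate, contradicting `V ≥ 1`; so `u ≥ 0`, hence `V ≤ C e^{δt}`. If `u` were not bounded away
from `0`, integrating `u'` from `∞` would give `u = O(e^{-2δt})`, i.e. `V' + δV → 0`, and then
`V' ≤ -δ/2` eventually, again contradicting `V ≥ 1`. So `u ≥ c > 0`, which forces `V ≥ c' e^{δt}`.
The energy `H` has `H' = -Aδ (e^{-δt} V)^p ≤ -Aδ c'^p`, so `H` cannot stay nonnegative.
-/

open Real Set Filter Topology

theorem sub_le_sub_of_hasDerivAt_le {f g f' g' : ℝ → ℝ} {a s t : ℝ}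
    (hf : ∀ x ≥ a, HasDerivAt f (f' x) x) (hg : ∀ x ≥ a, HasDerivAt g (g' x) x)
    (hfg : ∀ x ≥ a, f' x ≤ g' x) (has : a ≤ s) (hst : s ≤ t) :
    f t - f s ≤ g t - g s := by
  have hmono : MonotoneOn (g - f) (Ici a) := by
    refine monotoneOn_of_hasDerivWithinAt_nonneg (f' := g' - f') (convex_Ici a)
      (fun x hx => ((hg x hx).sub (hf x hx)).continuousAt.continuousWithinAt) ?_ ?_
    · rw [interior_Ici]
      exact fun x hx => ((hg x hx.le).sub (hf x hx.le)).hasDerivWithinAt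
    · rw [interior_Ici]
      exact fun x hx => sub_nonneg.2 (hfg x hx.le)
  have := hmono has (has.trans hst) hst
  simp only [Pi.sub_apply] at this
  linarith

theorem not_bddBelow_image_Ici_of_hasDerivAt_le_neg {f f' : ℝ → ℝ} {a k : ℝ} (hk : 0 < k)
    (hf : ∀ x ≥ a, HasDerivAt f (f' x) x) (hf' : ∀ x ≥ a, f' x ≤ -k) :
    ¬ BddBelow (f '' Ici a) := by
  rintro ⟨m, hm⟩
  have hma : m ≤ f a := hm ⟨a, self_mem_Ici, rfl⟩
  set t := a + (f a - m + 1) / k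
  have hat : a ≤ t := le_add_of_nonneg_right (by positivity)
  have hlin := sub_le_sub_of_hasDerivAt_le hf (fun x _ => (hasDerivAt_id x).const_mul (-k))
    (fun x hx => by simpa using hf' x hx) le_rfl hat
  have hmt : m ≤ f t := hm ⟨t, hat, rfl⟩
  have : -k * t - -k * a = -(f a - m + 1) := by
    simp only [t]; field_simp; ring
  simp only [id] at hlin
  linarith

/-- Up to the factor `2δ`, the coefficient of the growing mode `e^{δt}` of `V'' = δ² V`:
`e^{-δt} V → (lim u) / (2δ)`. -/
noncomputable def growingModeCoeff (δ : ℝ) (V : ℝ → ℝ) (t : ℝ) : ℝ :=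
  exp (-δ * t) * (deriv V t + δ * V t)

noncomputable def energy (δ A p : ℝ) (V : ℝ → ℝ) (t : ℝ) : ℝ :=
  (1/2) * (deriv V t)^2 - (δ^2/2) * (V t)^2 + (A/p) * exp (-p * δ * t) * V t ^ p

section

variable {δ A p t : ℝ} {V : ℝ → ℝ}

theorem hasDerivAt_exp_const_mul (c : ℝ) (t : ℝ) :
    HasDerivAt (fun s => exp (c * s)) (c * exp (c * t)) t := by
  simpa [mul_comm] using ((hasDerivAt_id t).const_mul c).exp

theorem hasDerivAt_growingModeCoeff (hV : HasDerivAt V (deriv V t) t)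
    (hV' : HasDerivAt (deriv V) (deriv (deriv V) t) t) :
    HasDerivAt (growingModeCoeff δ V) (exp (-δ * t) * (deriv (deriv V) t - δ ^ 2 * V t)) t := by
  refine ((hasDerivAt_exp_const_mul (-δ) t).fun_mul (hV'.fun_add (hV.const_mul δ))).congr_deriv ?_
  ring

theorem hasDerivAt_exp_mul (hV : HasDerivAt V (deriv V t) t) :
    HasDerivAt (fun s => exp (δ * s) * V s) (exp (2 * δ * t) * growingModeCoeff δ V t) t := by
  refine ((hasDerivAt_exp_const_mul δ t).fun_mul hV).congr_deriv ?_
  rw [growingModeCoeff, ← mul_assoc, ← exp_add]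
  ring_nf

theorem hasDerivAt_energy (hp : p ≠ 0) (hVt : 0 < V t) (hV : HasDerivAt V (deriv V t) t)
    (hV' : HasDerivAt (deriv V) (deriv (deriv V) t) t) :
    HasDerivAt (energy δ A p V)
      (deriv V t * (deriv (deriv V) t - δ ^ 2 * V t + A * exp (-p * δ * t) * V t ^ (p - 1))
        - A * δ * exp (-p * δ * t) * V t ^ p) t := by
  have hpow : V t ^ p = V t ^ (p - 1) * V t := by
    rw [← rpow_add_one hVt.ne']; ring_nf
  refine (((hV'.fun_pow 2).const_mul (1/2) |>.fun_sub ((hV.fun_pow 2).const_mul (δ^2/2))).fun_add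
    (((hasDerivAt_exp_const_mul (-p * δ) t).const_mul (A/p)).fun_mul
      (hV.rpow_const (Or.inl hVt.ne')))).congr_deriv ?_
  rw [hpow]
  field_simp
  ring

end

structure IsOneLESolution (δ A p : ℝ) (V : ℝ → ℝ) : Prop where
  hasDerivAt : ∀ t > 0, HasDerivAt V (deriv V t) t
  hasDerivAt_deriv : ∀ t > 0, HasDerivAt (deriv V) (deriv (deriv V) t) t
  one_le : ∀ t > 0, 1 ≤ V t
  ode : ∀ t > 0, deriv (deriv V) t - δ ^ 2 * V t + A * exp (-p * δ * t) * V t ^ (p - 1) = 0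

namespace IsOneLESolution

variable {δ A p : ℝ} {V : ℝ → ℝ}

theorem of_contDiffOn (hV : ContDiffOn ℝ 2 V (Ici 0)) (hV1 : ∀ t > 0, 1 ≤ V t)
    (hode : ∀ t > 0, deriv (deriv V) t - δ ^ 2 * V t + A * exp (-p * δ * t) * V t ^ (p - 1) = 0) :
    IsOneLESolution δ A p V := by
  have hV₀ : ContDiffOn ℝ 2 V (Ioi 0) := hV.mono Ioi_subset_Ici_self
  have hV'₀ : ContDiffOn ℝ 1 (deriv V) (Ioi 0) := hV₀.deriv_of_isOpen isOpen_Ioi (by norm_num)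
  refine ⟨fun t ht => ?_, fun t ht => ?_, hV1, hode⟩
  · exact ((hV₀.contDiffAt (Ioi_mem_nhds ht)).differentiableAt (by norm_num)).hasDerivAt
  · exact ((hV'₀.contDiffAt (Ioi_mem_nhds ht)).differentiableAt (by norm_num)).hasDerivAt

theorem hasDerivAt_growingModeCoeff (hV : IsOneLESolution δ A p V) {t : ℝ} (ht : 0 < t) :
    HasDerivAt (growingModeCoeff δ V) (-(A * exp (-(1 + p) * δ * t) * V t ^ (p - 1))) t := by
  refine (_root_.hasDerivAt_growingModeCoeff (hV.hasDerivAt t ht)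
    (hV.hasDerivAt_deriv t ht)).congr_deriv ?_
  rw [show deriv (deriv V) t - δ ^ 2 * V t = -(A * exp (-p * δ * t) * V t ^ (p - 1)) by
    linarith [hV.ode t ht], show -(1 + p) * δ * t = -δ * t + -p * δ * t by ring, exp_add]
  ring

theorem pos (hV : IsOneLESolution δ A p V) {t : ℝ} (ht : 0 < t) : 0 < V t :=
  one_pos.trans_le (hV.one_le t ht)

theorem growingModeCoeff_antitoneOn (hV : IsOneLESolution δ A p V) (hA : 0 ≤ A) :
    AntitoneOn (growingModeCoeff δ V) (Ioi 0) := by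
  intro s hs t _ hst
  have := sub_le_sub_of_hasDerivAt_le (fun x hx => hV.hasDerivAt_growingModeCoeff (hs.trans_le hx))
    (fun x _ => hasDerivAt_const x (0 : ℝ)) (fun x hx => ?_) le_rfl hst
  · linarith
  · simp only [neg_nonpos]
    have := rpow_nonneg (hV.pos (hs.trans_le hx)).le (p - 1)
    positivity

theorem growingModeCoeff_nonneg (hV : IsOneLESolution δ A p V) (hδ : 0 < δ) (hA : 0 ≤ A)
    {t : ℝ} (ht : 0 < t) : 0 ≤ growingModeCoeff δ V t := by
  by_contra! hneg
  refine not_bddBelow_image_Ici_of_hasDerivAt_le_neg (neg_pos.2 hneg)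
    (fun s hs => hasDerivAt_exp_mul (δ := δ) (hV.hasDerivAt s (ht.trans_le hs))) (fun s hs => ?_)
    ⟨0, ?_⟩
  · have hus : growingModeCoeff δ V s ≤ growingModeCoeff δ V t :=
      hV.growingModeCoeff_antitoneOn hA ht (ht.trans_le hs) hs
    have hexp : 1 ≤ exp (2 * δ * s) := one_le_exp (by nlinarith)
    rw [neg_neg]
    nlinarith
  · rintro _ ⟨s, hs, rfl⟩
    exact mul_nonneg (exp_pos _).le (hV.pos (ht.trans_le hs)).le

theorem exists_le_mul_exp (hV : IsOneLESolution δ A p V) (hδ : 0 < δ) (hA : 0 ≤ A) :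
    ∃ C, ∀ t ≥ 1, V t ≤ C * exp (δ * t) := by
  set M := growingModeCoeff δ V 1
  have hM : 0 ≤ M := hV.growingModeCoeff_nonneg hδ hA one_pos
  have hV1 : 0 ≤ exp (δ * 1) * V 1 := mul_nonneg (exp_pos _).le (hV.pos one_pos).le
  refine ⟨exp (δ * 1) * V 1 + M / (2 * δ), fun t ht => ?_⟩
  have hcmp := sub_le_sub_of_hasDerivAt_le (a := 1)
    (fun s hs => hasDerivAt_exp_mul (δ := δ) (hV.hasDerivAt s (one_pos.trans_le hs)))
    (fun s _ => (hasDerivAt_exp_const_mul (2 * δ) s).const_mul (M / (2 * δ)))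
    (fun s hs => ?_) le_rfl ht
  · have hexp : 1 ≤ exp (2 * δ * t) := one_le_exp (by nlinarith)
    have hsq : exp (δ * t) * exp (δ * t) = exp (2 * δ * t) := by rw [← exp_add]; ring_nf
    have hpos := exp_pos (δ * t)
    have : exp (δ * t) * V t ≤ (exp (δ * 1) * V 1 + M / (2 * δ)) * exp (2 * δ * t) := by
      nlinarith [exp_pos (2 * δ * 1), div_nonneg hM (by positivity : (0:ℝ) ≤ 2 * δ)]
    rw [← hsq] at this
    nlinarith
  · have hus : growingModeCoeff δ V s ≤ M :=
      hV.growingModeCoeff_antitoneOn hA (mem_Ioi.2 one_pos) (one_pos.trans_le hs) hs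
    field_simp
    nlinarith [exp_pos (2 * δ * s)]

theorem growingModeCoeff_le_of_le_mul_exp (hV : IsOneLESolution δ A p V) (hδ : 0 < δ)
    (hA : 0 ≤ A) (hp : 1 ≤ p) {C : ℝ} (hC : ∀ t ≥ 1, V t ≤ C * exp (δ * t))
    (hinf : ∀ ε > 0, ∃ s > 0, growingModeCoeff δ V s < ε) {t : ℝ} (ht : 1 ≤ t) :
    growingModeCoeff δ V t ≤ A * C ^ (p - 1) / (2 * δ) * exp (-(2 * δ) * t) := by
  have hC0 : 0 ≤ C := (pos_of_mul_pos_left ((one_pos.trans_le (hV.one_le 1 one_pos)).trans_le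
    (hC 1 le_rfl)) (exp_pos _).le).le
  set K := A * C ^ (p - 1) / (2 * δ)
  have hK : 0 ≤ K := by positivity
  have hderiv : ∀ x ≥ 1, K * (-(2 * δ) * exp (-(2 * δ) * x))
      ≤ -(A * exp (-(1 + p) * δ * x) * V x ^ (p - 1)) := by
    intro x hx
    have hVx : V x ^ (p - 1) ≤ C ^ (p - 1) * exp (δ * x * (p - 1)) := by
      rw [exp_mul, ← mul_rpow hC0 (exp_pos _).le]
      exact rpow_le_rpow (hV.pos (one_pos.trans_le hx)).le (hC x hx) (by linarith)
    have hexp : exp (-(1 + p) * δ * x) * exp (δ * x * (p - 1)) = exp (-(2 * δ) * x) := by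
      rw [← exp_add]; ring_nf
    calc K * (-(2 * δ) * exp (-(2 * δ) * x))
        = -(A * exp (-(1 + p) * δ * x) * (C ^ (p - 1) * exp (δ * x * (p - 1)))) := by
          rw [← hexp]; simp only [K]; field_simp
      _ ≤ -(A * exp (-(1 + p) * δ * x) * V x ^ (p - 1)) := by gcongr
  have htail : ∀ s ≥ t, growingModeCoeff δ V t ≤ growingModeCoeff δ V s + K * exp (-(2 * δ) * t) := by
    intro s hs
    have := sub_le_sub_of_hasDerivAt_le (f := fun x => K * exp (-(2 * δ) * x))
      (fun x _ => (hasDerivAt_exp_const_mul _ x).const_mul K)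
      (fun x hx => hV.hasDerivAt_growingModeCoeff (one_pos.trans_le hx)) hderiv ht hs
    nlinarith [exp_pos (-(2 * δ) * s)]
  refine le_of_forall_pos_le_add fun ε hε => ?_
  obtain ⟨s, hs, hus⟩ := hinf ε hε
  have := htail (max s t) (le_max_right _ _)
  have := hV.growingModeCoeff_antitoneOn hA hs (hs.trans_le (le_max_left _ _)) (le_max_left s t)
  linarith

theorem exists_pos_le_growingModeCoeff (hV : IsOneLESolution δ A p V) (hδ : 0 < δ) (hA : 0 ≤ A)
    (hp : 1 ≤ p) : ∃ c > 0, ∀ t > 0, c ≤ growingModeCoeff δ V t := by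
  by_contra! hinf
  obtain ⟨C, hC⟩ := hV.exists_le_mul_exp hδ hA
  set K := A * C ^ (p - 1) / (2 * δ)
  have hsmall : ∀ᶠ t in atTop, K * exp (-δ * t) ≤ δ / 2 := by
    have : Tendsto (fun t => K * exp (-δ * t)) atTop (𝓝 0) := by
      simpa using ((tendsto_exp_atBot.comp
        (tendsto_id.const_mul_atTop_of_neg (neg_neg_of_pos hδ))).const_mul K)
    exact this.eventually (ge_mem_nhds (half_pos hδ))
  obtain ⟨T, hT⟩ := eventually_atTop.1 hsmall
  refine not_bddBelow_image_Ici_of_hasDerivAt_le_neg (a := max T 1) (half_pos hδ)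
    (fun t ht => hV.hasDerivAt t (one_pos.trans_le ((le_max_right _ _).trans ht)))
    (fun t ht => ?_) ⟨1, ?_⟩
  · have ht1 : 1 ≤ t := (le_max_right _ _).trans ht
    have hu := hV.growingModeCoeff_le_of_le_mul_exp hδ hA hp hC hinf ht1
    have hflux : deriv V t + δ * V t ≤ K * exp (-δ * t) := calc
      deriv V t + δ * V t = exp (δ * t) * growingModeCoeff δ V t := by
        rw [growingModeCoeff, ← mul_assoc, ← exp_add]; simp
      _ ≤ exp (δ * t) * (K * exp (-(2 * δ) * t)) := by gcongr
      _ = K * exp (-δ * t) := by rw [mul_left_comm, ← exp_add]; ring_nf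
    have := hT t ((le_max_left _ _).trans ht)
    nlinarith [hV.one_le t (one_pos.trans_le ht1)]
  · rintro _ ⟨t, ht, rfl⟩
    exact hV.one_le t (one_pos.trans_le ((le_max_right _ _).trans ht))

theorem mul_exp_le_of_le_growingModeCoeff (hV : IsOneLESolution δ A p V) (hδ : 0 < δ) {c : ℝ}
    (hc : 0 ≤ c) (hcu : ∀ t > 0, c ≤ growingModeCoeff δ V t) {t : ℝ} (ht : 1 + 1 / (2 * δ) ≤ t) :
    c / (4 * δ) * exp (δ * t) ≤ V t := by
  have ht1 : 1 ≤ t := le_trans (by simp; positivity) ht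
  have hcmp := sub_le_sub_of_hasDerivAt_le (a := 1) (f := fun x => c / (2 * δ) * exp (2 * δ * x))
    (fun x _ => (hasDerivAt_exp_const_mul (2 * δ) x).const_mul _)
    (fun x hx => hasDerivAt_exp_mul (δ := δ) (hV.hasDerivAt x (one_pos.trans_le hx)))
    (fun x hx => ?_) le_rfl ht1
  · have hdouble : 2 * exp (2 * δ * 1) ≤ exp (2 * δ * t) := calc
      2 * exp (2 * δ * 1) ≤ exp 1 * exp (2 * δ * 1) := by
        gcongr; linarith [add_one_le_exp 1]
      _ = exp (2 * δ * (1 + 1 / (2 * δ))) := by rw [← exp_add]; congr 1; field_simp; ring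
      _ ≤ exp (2 * δ * t) := by gcongr
    have hsq : exp (δ * t) * exp (δ * t) = exp (2 * δ * t) := by rw [← exp_add]; ring_nf
    have hg1 : 0 ≤ exp (δ * 1) * V 1 := mul_nonneg (exp_pos _).le (hV.pos one_pos).le
    have : exp (δ * t) * (c / (4 * δ) * exp (δ * t)) ≤ exp (δ * t) * V t := by
      rw [mul_left_comm, hsq]
      have : c / (4 * δ) * exp (2 * δ * t) ≤ c / (2 * δ) * (exp (2 * δ * t) - exp (2 * δ * 1)) := by
        rw [div_mul_eq_mul_div, div_mul_eq_mul_div, div_le_div_iff₀ (by positivity) (by positivity)]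
        nlinarith [mul_le_mul_of_nonneg_left hdouble (by positivity : 0 ≤ c * δ)]
      linarith
    exact le_of_mul_le_mul_left this (exp_pos _)
  · field_simp
    exact hcu x (one_pos.trans_le hx)

theorem not_forall_energy_nonneg (hV : IsOneLESolution δ A p V) (hδ : 0 < δ) (hA : 0 < A)
    (hp : 0 < p) {c : ℝ} (hc : 0 < c) (hcu : ∀ t > 0, c ≤ growingModeCoeff δ V t) :
    ¬ ∀ t > 0, 0 ≤ energy δ A p V t := by
  intro hH
  set T := 1 + 1 / (2 * δ)
  have hT : 0 < T := by positivity
  refine not_bddBelow_image_Ici_of_hasDerivAt_le_neg (a := T) (k := A * δ * (c / (4 * δ)) ^ p)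
    (by positivity)
    (fun t ht => hasDerivAt_energy (δ := δ) (A := A) hp.ne' (hV.pos (hT.trans_le ht))
      (hV.hasDerivAt t (hT.trans_le ht)) (hV.hasDerivAt_deriv t (hT.trans_le ht)))
    (fun t ht => ?_) ⟨0, ?_⟩
  · rw [hV.ode t (hT.trans_le ht), mul_zero, zero_sub, neg_le_neg_iff, mul_assoc (A * δ)]
    gcongr
    have h := rpow_le_rpow (by positivity) (hV.mul_exp_le_of_le_growingModeCoeff hδ hc.le hcu ht)
      hp.le
    rw [mul_rpow (by positivity) (exp_pos _).le, ← exp_mul] at h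
    calc (c / (4 * δ)) ^ p = exp (-p * δ * t) * ((c / (4 * δ)) ^ p * exp (δ * t * p)) := by
          rw [mul_left_comm, ← exp_add]; ring_nf; simp
      _ ≤ exp (-p * δ * t) * V t ^ p := by gcongr
  · rintro _ ⟨t, ht, rfl⟩
    exact hH t (hT.trans_le ht)

end IsOneLESolution

theorem stmt_11_general (δ A p : ℝ) (hδ : 0 < δ) (hA : 0 < A) (hp : 1 < p) (V : ℝ → ℝ)
    (hV : ContDiffOn ℝ 2 V (Set.Ici 0))
    (hV1 : ∀ t ≥ (0:ℝ), 1 ≤ V t)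
    (heq : ∀ t ≥ (0:ℝ), deriv (deriv V) t - δ^2 * V t
      + A * Real.exp (-p * δ * t) * V t ^ (p - 1) = 0)
    (hH : ∀ t ≥ (0:ℝ),
      0 ≤ (1/2) * (deriv V t)^2 - (δ^2/2) * (V t)^2
        + (A/p) * Real.exp (-p * δ * t) * V t ^ p) :
    False := by
  have hsol : IsOneLESolution δ A p V :=
    .of_contDiffOn hV (fun t ht => hV1 t ht.le) (fun t ht => heq t ht.le)
  obtain ⟨c, hc, hcu⟩ := hsol.exists_pos_le_growingModeCoeff hδ hA.le hp.le
  exact hsol.not_forall_energy_nonneg hδ hA (by linarith) hc hcu fun t ht => hH t ht.le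

theorem stmt_11 (δ A p : ℝ) (hδ : 0 < δ) (hA : 0 < A) (hp : 1 < p) (V : ℝ → ℝ)
    (hV : ContDiffOn ℝ 2 V (Set.Ici 0))
    (hV0 : V 0 = 1) (hV'0 : deriv V 0 = 0) (hV1 : ∀ t ≥ (0:ℝ), 1 ≤ V t)
    (heq : ∀ t ≥ (0:ℝ), deriv (deriv V) t - δ^2 * V t
      + A * Real.exp (-p * δ * t) * V t ^ (p - 1) = 0)
    (hH : ∀ t ≥ (0:ℝ),
      0 ≤ (1/2) * (deriv V t)^2 - (δ^2/2) * (V t)^2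
        + (A/p) * Real.exp (-p * δ * t) * V t ^ p) :
    False :=
  stmt_11_general δ A p hδ hA hp V hV hV1 heq hH
end

section
/- Let δ, C > 0, 2p - 1 > 1, and let w: [T,∞) → (0,∞) be C¹ and bounded with w(t) → 0 as t → ∞, and suppose y(t) := w'(t) + δw(t) satisfies y > 0, y bounded, and y' - δy ≥ -Cw(t)^{2p-1} on [T,∞). If additionally w'(t) < 0 for t > T, then w'(t) + δw(t) ≤ (C/δ)w(t)^{2p-1} for all t > T, and consequently there exists a constant C' such that e^{δt}w(t) ≤ C' for all large t. -/
open Filter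

theorem stmt_12 (δ C p T : ℝ) (hδ : 0 < δ) (hC : 0 < C) (hp : 1 < p)
    (w : ℝ → ℝ) (hw : ContDiffOn ℝ 1 w (Set.Ici T))
    (hpos : ∀ t ≥ T, 0 < w t)
    (hwbd : ∃ M, ∀ t ≥ T, w t ≤ M)
    (hwlim : Tendsto w atTop (nhds 0))
    (hy_diff : ∀ t > T, DifferentiableAt ℝ (fun s => deriv w s + δ * w s) t)
    (hy_pos : ∀ t ≥ T, 0 < deriv w t + δ * w t)
    (hy_bd : ∃ M, ∀ t ≥ T, deriv w t + δ * w t ≤ M)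
    (hy_ineq : ∀ t > T, deriv (fun s => deriv w s + δ * w s) t
      - δ * (deriv w t + δ * w t) ≥ -C * w t ^ (2*p - 1))
    (hw' : ∀ t > T, deriv w t < 0) :
    (∀ t > T, deriv w t + δ * w t ≤ (C/δ) * w t ^ (2*p - 1)) ∧
    ∃ C' T', ∀ t ≥ T', Real.exp (δ * t) * w t ≤ C' := by
  obtain ⟨M, hM⟩ := hy_bd
  set y : ℝ → ℝ := fun s => deriv w s + δ * w s with hydef
  have hwdiff : ∀ s, T < s → DifferentiableAt ℝ w s := fun s hs =>
    ((hw.differentiableOn (by norm_num)) s hs.le).differentiableAt (Ici_mem_nhds hs)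
  -- w is antitone on (T, ∞)
  have hanti : ∀ t, T < t → ∀ s, t ≤ s → w s ≤ w t := by
    intro t ht s hs
    rcases eq_or_lt_of_le hs with rfl | hlt
    · exact le_refl _
    · have hA : StrictAntiOn w (Set.Ici t) := by
        refine strictAntiOn_of_deriv_neg (convex_Ici t) ?_ ?_
        · intro x hx
          exact (hwdiff x (ht.trans_le hx)).continuousAt.continuousWithinAt
        · intro x hx
          rw [interior_Ici] at hx
          exact hw' x (ht.trans hx)
      exact (hA (Set.self_mem_Ici) (Set.mem_Ici.mpr hs) hlt).le
  have part1 : ∀ t > T, deriv w t + δ * w t ≤ (C/δ) * w t ^ (2*p - 1) := by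
    intro t ht
    set K : ℝ := C/δ * w t ^ (2*p - 1) with hK
    set G : ℝ → ℝ := fun s => Real.exp (-δ*s) * (y s - K) with hGdef
    have hGd : ∀ x, T < x →
        HasDerivAt G (Real.exp (-δ*x) * (-δ) * (y x - K) + Real.exp (-δ*x) * deriv y x) x := by
      intro x hx
      have h0 : HasDerivAt (fun s : ℝ => -δ*s) (-δ) x := by
        simpa using (hasDerivAt_id x).const_mul (-δ)
      have h1 : HasDerivAt (fun s : ℝ => Real.exp (-δ*s)) (Real.exp (-δ*x) * (-δ)) x :=
        (Real.hasDerivAt_exp (-δ*x)).comp x h0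
      have h2 : HasDerivAt (fun s => y s - K) (deriv y x) x :=
        ((hy_diff x hx).hasDerivAt).sub_const K
      exact h1.mul h2
    have hGmono : MonotoneOn G (Set.Ici t) := by
      refine monotoneOn_of_deriv_nonneg (convex_Ici t) ?_ ?_ ?_
      · intro x hx
        exact (hGd x (ht.trans_le hx)).continuousAt.continuousWithinAt
      · intro x hx
        rw [interior_Ici] at hx
        exact ((hGd x (ht.trans hx)).differentiableAt).differentiableWithinAt
      · intro x hx
        rw [interior_Ici] at hx
        have hxT : T < x := ht.trans hx
        rw [(hGd x hxT).deriv]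
        have hyx : y x = deriv w x + δ * w x := rfl
        have hwx : w x ≤ w t := hanti t ht x hx.le
        have hwpow : w x ^ (2*p-1) ≤ w t ^ (2*p-1) :=
          Real.rpow_le_rpow (hpos x hxT.le).le hwx (by linarith)
        have hKδ : δ * K = C * w t ^ (2*p-1) := by
          rw [hK]; field_simp
        have hexp := Real.exp_pos (-δ*x)
        have h5 : 0 ≤ deriv y x - δ * y x + δ * K := by
          rw [hyx, hKδ]
          have h6 := hy_ineq x hxT
          have h7 := mul_le_mul_of_nonneg_left hwpow hC.le
          linarith
        have h8 : Real.exp (-δ*x) * (-δ) * (y x - K) + Real.exp (-δ*x) * deriv y x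
            = Real.exp (-δ*x) * (deriv y x - δ * y x + δ * K) := by ring
        rw [h8]
        exact mul_nonneg hexp.le h5
    have hGlim : Tendsto G atTop (nhds 0) := by
      have hB : Tendsto (fun s : ℝ => (Real.exp (δ*s))⁻¹ * (M + |K|)) atTop (nhds 0) := by
        have h1 : Tendsto (fun s : ℝ => δ*s) atTop atTop :=
          Tendsto.const_mul_atTop hδ tendsto_id
        have h2 := (Real.tendsto_exp_atTop.comp h1).inv_tendsto_atTop
        simpa using h2.mul_const (M + |K|)
      refine squeeze_zero_norm' ?_ hB
      filter_upwards [eventually_ge_atTop T] with s hs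
      have hy1 : 0 < y s := hy_pos s hs
      have hy2 : y s ≤ M := hM s hs
      have h3 : |y s - K| ≤ M + |K| := by
        rw [abs_sub_le_iff]
        constructor <;> nlinarith [abs_nonneg K, le_abs_self K, neg_abs_le K]
      have h4 : ‖G s‖ = Real.exp (-δ*s) * |y s - K| := by
        rw [hGdef]; simp [abs_mul, Real.abs_exp]
      rw [h4, neg_mul, Real.exp_neg]
      exact mul_le_mul_of_nonneg_left h3 (by positivity)
    have hGt : G t ≤ 0 := by
      refine ge_of_tendsto hGlim ?_
      filter_upwards [eventually_ge_atTop t] with s hs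
      exact hGmono Set.self_mem_Ici (Set.mem_Ici.mpr hs) hs
    have hexp := Real.exp_pos (-δ*t)
    have hyK : y t - K ≤ 0 := by
      by_contra h
      push_neg at h
      have : 0 < G t := mul_pos hexp h
      linarith
    exact sub_nonpos.mp hyK
  refine ⟨part1, ?_⟩
  -- Part 2
  set q : ℝ := 2 - 2*p with hqdef
  have hqneg : q < 0 := by rw [hqdef]; linarith
  have hqne : q ≠ 0 := ne_of_lt hqneg
  set ε : ℝ := (δ^2/C) ^ (1/(2*p-2)) with hεdef
  have hbase : (0:ℝ) < δ^2/C := by positivity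
  have hε : 0 < ε := Real.rpow_pos_of_pos hbase _
  have hev : ∀ᶠ s in atTop, w s < ε ∧ T < s :=
    (hwlim.eventually_lt_const hε).and (eventually_gt_atTop T)
  obtain ⟨t₀, ht₀ε, ht₀T⟩ := hev.exists
  set g : ℝ → ℝ := fun s => Real.exp (δ*s) * w s with hgdef
  have hgpos : ∀ s, T ≤ s → 0 < g s := fun s hs => mul_pos (Real.exp_pos _) (hpos s hs)
  set φ : ℝ → ℝ := fun s => g s ^ q - C/δ^2 * Real.exp (q*(δ*s)) with hφdef
  have hgd : ∀ x, T < x →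
      HasDerivAt g (Real.exp (δ*x) * δ * w x + Real.exp (δ*x) * deriv w x) x := by
    intro x hx
    have h0 : HasDerivAt (fun s : ℝ => δ*s) δ x := by
      simpa using (hasDerivAt_id x).const_mul δ
    have h1 : HasDerivAt (fun s : ℝ => Real.exp (δ*s)) (Real.exp (δ*x) * δ) x :=
      (Real.hasDerivAt_exp (δ*x)).comp x h0
    exact h1.mul ((hwdiff x hx).hasDerivAt)
  have hφd : ∀ x, T < x → HasDerivAt φ
      ((Real.exp (δ*x) * δ * w x + Real.exp (δ*x) * deriv w x) * q * g x ^ (q-1)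
        - C/δ^2 * (Real.exp (q*(δ*x)) * (q*δ))) x := by
    intro x hx
    have h1 : HasDerivAt (fun s => g s ^ q)
        ((Real.exp (δ*x) * δ * w x + Real.exp (δ*x) * deriv w x) * q * g x ^ (q-1)) x :=
      (hgd x hx).rpow_const (Or.inl (ne_of_gt (hgpos x hx.le)))
    have h0 : HasDerivAt (fun s : ℝ => q*(δ*s)) (q*δ) x := by
      simpa [mul_assoc] using (hasDerivAt_id x).const_mul (q*δ)
    have h2 : HasDerivAt (fun s : ℝ => C/δ^2 * Real.exp (q*(δ*s)))
        (C/δ^2 * (Real.exp (q*(δ*x)) * (q*δ))) x :=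
      (((Real.hasDerivAt_exp (q*(δ*x))).comp x h0).const_mul (C/δ^2))
    exact h1.sub h2
  -- key rpow identity
  have hkey : ∀ x, T < x →
      Real.exp (δ*x) * w x ^ (2*p-1) * g x ^ (q-1) = Real.exp (q*(δ*x)) := by
    intro x hx
    have hwx := hpos x hx.le
    have hex := Real.exp_pos (δ*x)
    rw [hgdef]
    rw [Real.mul_rpow hex.le hwx.le, ← Real.exp_mul]
    have h9 : Real.exp (δ*x) * w x ^ (2*p-1) * (Real.exp (δ*x*(q-1)) * w x ^ (q-1))
        = (Real.exp (δ*x) * Real.exp (δ*x*(q-1))) * (w x ^ (2*p-1) * w x ^ (q-1)) := by ring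
    rw [h9, ← Real.exp_add, ← Real.rpow_add hwx]
    have e1 : δ*x + δ*x*(q-1) = q*(δ*x) := by ring
    have e2 : 2*p-1 + (q-1) = 0 := by rw [hqdef]; ring
    rw [e1, e2, Real.rpow_zero, mul_one]
  have hφmono : MonotoneOn φ (Set.Ici t₀) := by
    refine monotoneOn_of_deriv_nonneg (convex_Ici t₀) ?_ ?_ ?_
    · intro x hx
      exact (hφd x (ht₀T.trans_le hx)).continuousAt.continuousWithinAt
    · intro x hx
      rw [interior_Ici] at hx
      exact ((hφd x (ht₀T.trans hx)).differentiableAt).differentiableWithinAt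
    · intro x hx
      rw [interior_Ici] at hx
      have hxT : T < x := ht₀T.trans hx
      rw [(hφd x hxT).deriv]
      have h1 : deriv w x + δ * w x ≤ C/δ * w x ^ (2*p-1) := part1 x hxT
      have hgq1 : 0 < g x ^ (q-1) := Real.rpow_pos_of_pos (hgpos x hxT.le) _
      have hex := Real.exp_pos (δ*x)
      have hg' : Real.exp (δ*x) * δ * w x + Real.exp (δ*x) * deriv w x
          ≤ Real.exp (δ*x) * (C/δ * w x ^ (2*p-1)) := by
        have h10 := mul_le_mul_of_nonneg_left h1 hex.le
        nlinarith
      have hqB : q * g x ^ (q-1) ≤ 0 := (mul_neg_of_neg_of_pos hqneg hgq1).le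
      have h2 : (Real.exp (δ*x) * (C/δ * w x ^ (2*p-1))) * (q * g x ^ (q-1))
          ≤ (Real.exp (δ*x) * δ * w x + Real.exp (δ*x) * deriv w x) * (q * g x ^ (q-1)) :=
        mul_le_mul_of_nonpos_right hg' hqB
      have h3 : Real.exp (δ*x) * (C/δ * w x ^ (2*p-1)) * (q * g x ^ (q-1))
          = C/δ * q * Real.exp (q*(δ*x)) := by
        rw [← hkey x hxT]; ring
      have h4 : C/δ^2 * (Real.exp (q*(δ*x)) * (q*δ)) = C/δ * q * Real.exp (q*(δ*x)) := by
        field_simp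
      nlinarith [h2, h3, h4]
  -- φ t₀ > 0
  have hwt₀ := hpos t₀ ht₀T.le
  have hφt₀ : 0 < φ t₀ := by
    have h2p : (2*p-2 : ℝ) ≠ 0 := ne_of_gt (by linarith)
    have hεq : ε ^ q = C/δ^2 := by
      rw [hεdef, ← Real.rpow_mul hbase.le]
      have e3 : 1/(2*p-2) * q = -1 := by
        rw [hqdef]; field_simp
        rw [div_eq_iff (sub_ne_zero.mpr hp.ne')]; ring
      rw [e3, Real.rpow_neg_one, inv_div]
    have hwq : C/δ^2 < w t₀ ^ q := by
      rw [← hεq]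
      exact Real.rpow_lt_rpow_of_neg hwt₀ ht₀ε hqneg
    have hgq : g t₀ ^ q = Real.exp (q*(δ*t₀)) * w t₀ ^ q := by
      rw [hgdef]
      rw [Real.mul_rpow (Real.exp_pos _).le hwt₀.le, ← Real.exp_mul,
        show δ*t₀*q = q*(δ*t₀) by ring]
    have hexq := Real.exp_pos (q*(δ*t₀))
    have : φ t₀ = g t₀ ^ q - C/δ^2 * Real.exp (q*(δ*t₀)) := rfl
    rw [this, hgq]
    nlinarith
  refine ⟨(φ t₀) ^ (1/q), t₀, ?_⟩
  intro t ht
  have htT : T ≤ t := ht₀T.le.trans ht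
  have hφt : φ t₀ ≤ φ t := hφmono Set.self_mem_Ici (Set.mem_Ici.mpr ht) ht
  have hφteq : φ t = g t ^ q - C/δ^2 * Real.exp (q*(δ*t)) := rfl
  have hexq := Real.exp_pos (q*(δ*t))
  have hCδ : 0 < C/δ^2 := by positivity
  have hgq : φ t₀ ≤ g t ^ q := by rw [hφteq] at hφt; exact hφt.trans (sub_le_self _ (mul_pos hCδ hexq).le)
  have h5 : (g t ^ q) ^ (1/q) ≤ (φ t₀) ^ (1/q) :=
    Real.rpow_le_rpow_of_nonpos hφt₀ hgq (le_of_lt (one_div_neg.mpr hqneg))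
  have h6 : (g t ^ q) ^ (1/q) = g t := by
    rw [← Real.rpow_mul (hgpos t htT).le, mul_one_div_cancel hqne, Real.rpow_one]
  show g t ≤ _
  rw [← h6]
  exact h5
end

section
/- Let N ≥ 4, δ = (N-2)/2, p = N/(N-2), and let u, v be positive radially symmetric C² functions on ℝᴺ\{0} solving -Δu = μ₁u^{2p-1} + βu^{p-1}v^p, -Δv = μ₂v^{2p-1} + βv^{p-1}u^p with μ₁, μ₂, β > 0. Suppose there exist constants C₁, C₂ > 0 such that u(r) ≥ C₁r^{-δ} and v(r) ≥ C₂ for all r ∈ (0,1]. If moreover r^{N-1}v'(r) → 0 as r → 0, then -v'(r) ≥ C·r^{1-N/2} for some constant C > 0 and all r ∈ (0,1], and consequently v(r) → +∞ as r → 0. -/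
/-!
The flux `r ^ (N - 1) * v'` has derivative `r ^ (N - 1) * Δv`, and the coupling term
`β v ^ (p - 1) u ^ p` alone makes `-Δv ≥ K r ^ (-N / 2)` on `(0, 1]`, because `δ p = N / 2`.
Hence `r ^ (N - 1) * v' + (2 K / N) r ^ (N / 2)` is nonincreasing on `(0, 1]` with limit `0` at
`0`, which gives `-v' ≥ (2 K / N) r ^ (1 - N / 2) ≥ (2 K / N) / r` when `N ≥ 4`. Then
`v + (2 K / N) log` is nonincreasing, so `v` blows up at least logarithmically.
-/

open Filter Set Real Topology

noncomputable def radialLaplacian (n : ℝ) (v : ℝ → ℝ) (r : ℝ) : ℝ :=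
  deriv (deriv v) r + (n - 1) / r * deriv v r

theorem antitoneOn_Ioc_of_deriv_nonpos {g : ℝ → ℝ} {b a : ℝ}
    (hg : ∀ x ∈ Ioc b a, DifferentiableAt ℝ g x) (hg' : ∀ x ∈ Ioo b a, deriv g x ≤ 0) :
    AntitoneOn g (Ioc b a) :=
  antitoneOn_of_deriv_nonpos (convex_Ioc b a)
    (fun x hx => (hg x hx).continuousAt.continuousWithinAt)
    (fun x hx => (hg x (interior_subset hx)).differentiableWithinAt)
    (fun x hx => hg' x (by rwa [interior_Ioc] at hx))

theorem AntitoneOn.le_of_tendsto_nhdsGT {g : ℝ → ℝ} {b a L : ℝ} (hg : AntitoneOn g (Ioc b a))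
    (hL : Tendsto g (𝓝[>] b) (𝓝 L)) {r : ℝ} (hr : r ∈ Ioc b a) : g r ≤ L := by
  refine ge_of_tendsto hL ?_
  filter_upwards [Ioo_mem_nhdsGT hr.1] with s hs
  exact hg ⟨hs.1, hs.2.le.trans hr.2⟩ hr hs.2.le

theorem tendsto_rpow_nhdsGT_zero {e : ℝ} (he : 0 < e) :
    Tendsto (fun r : ℝ => r ^ e) (𝓝[>] 0) (𝓝 0) := by
  have h : Tendsto (fun r : ℝ => r ^ e) (𝓝[>] 0) (𝓝 ((0 : ℝ) ^ e)) :=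
    (continuousAt_rpow_const 0 e (Or.inr he.le)).tendsto.mono_left nhdsWithin_le_nhds
  rwa [zero_rpow he.ne'] at h

theorem hasDerivAt_rpow_mul_deriv {n r : ℝ} {v : ℝ → ℝ} (hv : ContDiffOn ℝ 2 v (Ioi 0))
    (hr : 0 < r) :
    HasDerivAt (fun s => s ^ (n - 1) * deriv v s) (r ^ (n - 1) * radialLaplacian n v r) r := by
  have hv' : ContDiffOn ℝ 1 (deriv v) (Ioi 0) := hv.deriv_of_isOpen isOpen_Ioi (by norm_num)
  have hv'r : HasDerivAt (deriv v) (deriv (deriv v) r) r :=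
    ((hv'.differentiableOn one_ne_zero).differentiableAt (isOpen_Ioi.mem_nhds hr)).hasDerivAt
  refine ((hasDerivAt_rpow_const (p := n - 1) (Or.inl hr.ne')).mul hv'r).congr_deriv ?_
  rw [radialLaplacian, rpow_sub_one hr.ne' (n - 1)]
  field_simp
  ring

theorem le_neg_deriv_of_le_neg_radialLaplacian {n γ K a : ℝ} {v : ℝ → ℝ} (hγ : γ < n)
    (hv : ContDiffOn ℝ 2 v (Ioi 0))
    (hflux : Tendsto (fun r => r ^ (n - 1) * deriv v r) (𝓝[>] 0) (𝓝 0))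
    (hΔ : ∀ r ∈ Ioc 0 a, K * r ^ (-γ) ≤ -radialLaplacian n v r) :
    ∀ r ∈ Ioc 0 a, K / (n - γ) * r ^ (1 - γ) ≤ -deriv v r := by
  have hnγ : 0 < n - γ := sub_pos.2 hγ
  set g : ℝ → ℝ := fun r => r ^ (n - 1) * deriv v r + K / (n - γ) * r ^ (n - γ)
  have hg : ∀ r > 0, HasDerivAt g (r ^ (n - 1) * (radialLaplacian n v r + K * r ^ (-γ))) r := by
    intro r hr
    have hpow := (hasDerivAt_rpow_const (p := n - γ) (Or.inl hr.ne')).const_mul (K / (n - γ))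
    refine ((hasDerivAt_rpow_mul_deriv hv hr).add hpow).congr_deriv ?_
    rw [mul_add, mul_left_comm (r ^ (n - 1)), ← rpow_add hr, show n - 1 + -γ = n - γ - 1 by ring]
    field_simp
  have hg0 : Tendsto g (𝓝[>] 0) (𝓝 0) := by
    simpa using hflux.add ((tendsto_rpow_nhdsGT_zero hnγ).const_mul (K / (n - γ)))
  have hanti : AntitoneOn g (Ioc 0 a) :=
    antitoneOn_Ioc_of_deriv_nonpos (fun x hx => (hg x hx.1).differentiableAt) fun x hx => by
      rw [(hg x hx.1).deriv]
      exact mul_nonpos_of_nonneg_of_nonpos (rpow_pos_of_pos hx.1 _).le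
        (by linarith [hΔ x (Ioo_subset_Ioc_self hx)])
  intro r hr
  have hgr : g r ≤ 0 := hanti.le_of_tendsto_nhdsGT hg0 hr
  have hsplit : r ^ (n - γ) = r ^ (1 - γ) * r ^ (n - 1) := by
    rw [← rpow_add hr.1]
    ring_nf
  have hpos : 0 < r ^ (n - 1) := rpow_pos_of_pos hr.1 _
  have hprod : (K / (n - γ) * r ^ (1 - γ) + deriv v r) * r ^ (n - 1) ≤ 0 := by
    simp only [g, hsplit] at hgr
    linarith
  linarith [nonpos_of_mul_nonpos_left hprod hpos]

theorem le_source_of_lowerBounds {μ β p δ C₁ C₂ r a b : ℝ} (hμ : 0 ≤ μ) (hβ : 0 ≤ β)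
    (hp : 1 ≤ p) (hC₁ : 0 ≤ C₁) (hC₂ : 0 ≤ C₂) (hr : 0 < r) (ha : C₁ * r ^ (-δ) ≤ a)
    (hb : C₂ ≤ b) :
    β * C₂ ^ (p - 1) * C₁ ^ p * r ^ (-(δ * p)) ≤
      μ * b ^ (2 * p - 1) + β * b ^ (p - 1) * a ^ p := by
  have hb0 : 0 ≤ b := hC₂.trans hb
  have hpow : C₁ ^ p * r ^ (-(δ * p)) = (C₁ * r ^ (-δ)) ^ p := by
    rw [mul_rpow hC₁ (rpow_nonneg hr.le _), ← rpow_mul hr.le, neg_mul]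
  calc β * C₂ ^ (p - 1) * C₁ ^ p * r ^ (-(δ * p))
        = β * C₂ ^ (p - 1) * (C₁ * r ^ (-δ)) ^ p := by rw [mul_assoc, hpow]
    _ ≤ β * b ^ (p - 1) * a ^ p := by gcongr
    _ ≤ μ * b ^ (2 * p - 1) + β * b ^ (p - 1) * a ^ p :=
        le_add_of_nonneg_left (mul_nonneg hμ (rpow_nonneg hb0 _))

theorem tendsto_atTop_of_div_le_neg_deriv {v : ℝ → ℝ} {C a : ℝ} (ha : 0 < a) (hC : 0 < C)
    (hv : ∀ r ∈ Ioc 0 a, DifferentiableAt ℝ v r) (h : ∀ r ∈ Ioc 0 a, C / r ≤ -deriv v r) :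
    Tendsto v (𝓝[>] 0) atTop := by
  have hderiv : ∀ r ∈ Ioc 0 a, HasDerivAt (fun s => v s + C * log s) (deriv v r + C * r⁻¹) r :=
    fun r hr => (hv r hr).hasDerivAt.add ((hasDerivAt_log hr.1.ne').const_mul C)
  have hanti : AntitoneOn (fun s => v s + C * log s) (Ioc 0 a) :=
    antitoneOn_Ioc_of_deriv_nonpos (fun r hr => (hderiv r hr).differentiableAt) fun r hr => by
      rw [(hderiv r (Ioo_subset_Ioc_self hr)).deriv, ← div_eq_mul_inv]
      linarith [h r (Ioo_subset_Ioc_self hr)]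
  have hlow : Tendsto (fun r => v a + C * log a + -(C * log r)) (𝓝[>] 0) atTop :=
    tendsto_atTop_add_const_left _ _
      (tendsto_neg_atBot_atTop.comp (tendsto_log_nhdsGT_zero.const_mul_atBot hC))
  refine tendsto_atTop_mono' _ ?_ hlow
  filter_upwards [Ioc_mem_nhdsGT ha] with r hr
  linarith [hanti hr ⟨ha, le_rfl⟩ hr.2]

theorem stmt_15_general (N : ℕ) (hN : 4 ≤ N) (δ p μ₂ β C₁ C₂ : ℝ)
    (hδ : δ = ((N : ℝ) - 2) / 2) (hp : p = (N : ℝ) / ((N : ℝ) - 2))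
    (hμ₂ : 0 < μ₂) (hβ : 0 < β)
    (u v : ℝ → ℝ)
    (hv : ContDiffOn ℝ 2 v (Set.Ioi 0))
    (heqv : ∀ r > (0:ℝ), -(deriv (deriv v) r + (((N : ℝ) - 1) / r) * deriv v r)
      = μ₂ * v r ^ (2*p - 1) + β * v r ^ (p - 1) * u r ^ p)
    (hC₁ : 0 < C₁) (hC₂ : 0 < C₂)
    (hub : ∀ r ∈ Set.Ioc (0:ℝ) 1, C₁ * r ^ (-δ) ≤ u r)
    (hvb : ∀ r ∈ Set.Ioc (0:ℝ) 1, C₂ ≤ v r)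
    (hflux : Tendsto (fun r => r ^ ((N : ℝ) - 1) * deriv v r) (nhdsWithin 0 (Set.Ioi 0))
      (nhds 0)) :
    (∃ C > (0:ℝ), ∀ r ∈ Set.Ioc (0:ℝ) 1, C * r ^ (1 - (N : ℝ)/2) ≤ -deriv v r) ∧
    Tendsto v (nhdsWithin 0 (Set.Ioi 0)) atTop := by
  have hN4 : (4 : ℝ) ≤ N := by exact_mod_cast hN
  have hp1 : 1 ≤ p := by rw [hp, le_div_iff₀ (by linarith)]; linarith
  have hN2 : (N : ℝ) - 2 ≠ 0 := by linarith
  have hδp : δ * p = N / 2 := by rw [hδ, hp]; field_simp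
  set K := β * C₂ ^ (p - 1) * C₁ ^ p
  have hΔ : ∀ r ∈ Ioc (0 : ℝ) 1, K * r ^ (-(N / 2 : ℝ)) ≤ -radialLaplacian N v r := by
    intro r hr
    rw [radialLaplacian, heqv r hr.1, ← hδp]
    exact le_source_of_lowerBounds hμ₂.le hβ.le hp1 hC₁.le hC₂.le hr.1 (hub r hr) (hvb r hr)
  set C := K / (N - N / 2)
  have hC : 0 < C := div_pos (by positivity) (by linarith)
  have hbound := le_neg_deriv_of_le_neg_radialLaplacian (by linarith) hv hflux hΔ
  refine ⟨⟨C, hC, hbound⟩,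
    tendsto_atTop_of_div_le_neg_deriv one_pos hC (fun r hr => ?_) (fun r hr => ?_)⟩
  · exact (hv.differentiableOn (by norm_num)).differentiableAt (isOpen_Ioi.mem_nhds hr.1)
  · calc C / r = C * r ^ (-1 : ℝ) := by rw [rpow_neg_one, div_eq_mul_inv]
      _ ≤ C * r ^ (1 - (N : ℝ) / 2) :=
          mul_le_mul_of_nonneg_left (rpow_le_rpow_of_exponent_ge hr.1 hr.2 (by linarith)) hC.le
      _ ≤ -deriv v r := hbound r hr

theorem stmt_15 (N : ℕ) (hN : 4 ≤ N) (δ p μ₁ μ₂ β C₁ C₂ : ℝ)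
    (hδ : δ = ((N : ℝ) - 2) / 2) (hp : p = (N : ℝ) / ((N : ℝ) - 2))
    (hμ₁ : 0 < μ₁) (hμ₂ : 0 < μ₂) (hβ : 0 < β)
    (u v : ℝ → ℝ)
    (hu : ContDiffOn ℝ 2 u (Set.Ioi 0)) (hv : ContDiffOn ℝ 2 v (Set.Ioi 0))
    (hupos : ∀ r > (0:ℝ), 0 < u r) (hvpos : ∀ r > (0:ℝ), 0 < v r)
    (hequ : ∀ r > (0:ℝ), -(deriv (deriv u) r + (((N : ℝ) - 1) / r) * deriv u r)
      = μ₁ * u r ^ (2*p - 1) + β * u r ^ (p - 1) * v r ^ p)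
    (heqv : ∀ r > (0:ℝ), -(deriv (deriv v) r + (((N : ℝ) - 1) / r) * deriv v r)
      = μ₂ * v r ^ (2*p - 1) + β * v r ^ (p - 1) * u r ^ p)
    (hC₁ : 0 < C₁) (hC₂ : 0 < C₂)
    (hub : ∀ r ∈ Set.Ioc (0:ℝ) 1, C₁ * r ^ (-δ) ≤ u r)
    (hvb : ∀ r ∈ Set.Ioc (0:ℝ) 1, C₂ ≤ v r)
    (hflux : Tendsto (fun r => r ^ ((N : ℝ) - 1) * deriv v r) (nhdsWithin 0 (Set.Ioi 0))
      (nhds 0)) :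
    (∃ C > (0:ℝ), ∀ r ∈ Set.Ioc (0:ℝ) 1, C * r ^ (1 - (N : ℝ)/2) ≤ -deriv v r) ∧
    Tendsto v (nhdsWithin 0 (Set.Ioi 0)) atTop :=
  stmt_15_general N hN δ p μ₂ β C₁ C₂ hδ hp hμ₂ hβ u v hv heqv hC₁ hC₂ hub hvb hflux
end

section
/- Let δ, μ₂, β > 0 with β ≥ 3μ₂, and let v₂: ℝ → (0,∞) be a nonconstant C² periodic function solving v₂'' - δ²v₂ + μ₂v₂³ = 0. Then every nontrivial solution v₁ of the Hill equation v₁'' + (βv₂² - δ²)v₁ = 0 on ℝ changes sign; i.e., there is no positive solution v₁ > 0 of v₁'' + (βv₂² - δ²)v₁ = 0 on ℝ. -/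
/-!
Differentiating `v₂'' = δ² v₂ - μ₂ v₂³` shows that `y = v₂'` solves `y'' + (3μ₂ v₂² - δ²) y = 0`.
Since `v₂` is periodic and nonconstant, `y` is positive somewhere and vanishes on both sides of
that point (Rolle over a period), so it has a positive hump `y(a) = y(b) = 0`, `y > 0` on `(a, b)`.
Sturm comparison with the larger potential `β v₂² - δ² ≥ 3μ₂ v₂² - δ²` then shows that no solution
`v₁` of the Hill equation stays positive on `[a, b]`: for such `v₁` the Wronskian
`W = y' v₁ - y v₁'` would be nondecreasing on `(a, b)`, while `(y / v₁)' = W / v₁²` must take both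
signs there.
-/

open Set

theorem Function.Periodic.eq_apply_zero_of_antitone {α β : Type*} [AddCommGroup α] [LinearOrder α]
    [IsOrderedAddMonoid α] [Archimedean α] [PartialOrder β] {f : α → β} {L : α}
    (hf : Function.Periodic f L) (hL : 0 < L) (hanti : Antitone f) (x : α) : f x = f 0 := by
  obtain ⟨y, ⟨hy0, hyL⟩, hxy⟩ := hf.exists_mem_Ico₀ hL x
  rw [hxy]
  refine le_antisymm (hanti hy0) ?_
  calc f 0 = f L := hf.eq.symm
    _ ≤ f y := hanti hyL.le

theorem Function.Periodic.exists_deriv_pos {f : ℝ → ℝ} {L : ℝ} (hf : Function.Periodic f L)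
    (hL : 0 < L) (hdiff : Differentiable ℝ f) (hnonconst : ¬ ∃ c, ∀ t, f t = c) :
    ∃ c, 0 < deriv f c := by
  by_contra! hnonpos
  exact hnonconst ⟨f 0, hf.eq_apply_zero_of_antitone hL (antitone_of_deriv_nonpos hdiff hnonpos)⟩

theorem Function.Periodic.exists_deriv_eq_zero {f : ℝ → ℝ} {L : ℝ} (hf : Function.Periodic f L)
    (hL : 0 < L) (hdiff : Differentiable ℝ f) (c : ℝ) : ∃ z ∈ Ioo c (c + L), deriv f z = 0 :=
  _root_.exists_deriv_eq_zero (by linarith) hdiff.continuous.continuousOn (hf c).symm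

theorem exists_zero_Ico_pos {g : ℝ → ℝ} {c z : ℝ} (hg : Continuous g) (hc : 0 < g c)
    (hcz : c < z) (hz : g z = 0) : ∃ b, c < b ∧ g b = 0 ∧ ∀ t ∈ Ico c b, 0 < g t := by
  set S := Ici c ∩ g ⁻¹' {0}
  have hS_closed : IsClosed S := isClosed_Ici.inter (isClosed_singleton.preimage hg)
  have hS_bdd : BddBelow S := ⟨c, fun t ht => ht.1⟩
  obtain ⟨hcb, hgb⟩ : sInf S ∈ S := hS_closed.csInf_mem ⟨z, hcz.le, hz⟩ hS_bdd
  refine ⟨sInf S, hcb.lt_of_ne fun h => hc.ne' (h ▸ hgb), hgb, fun t ht => ?_⟩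
  by_contra! hgt
  obtain ⟨w, hw, hgw⟩ := intermediate_value_Icc' ht.1 hg.continuousOn ⟨hgt, hc.le⟩
  exact ht.2.not_ge ((csInf_le hS_bdd ⟨hw.1, hgw⟩).trans hw.2)

theorem exists_zero_Ioc_pos {g : ℝ → ℝ} {c z : ℝ} (hg : Continuous g) (hc : 0 < g c)
    (hzc : z < c) (hz : g z = 0) : ∃ a, a < c ∧ g a = 0 ∧ ∀ t ∈ Ioc a c, 0 < g t := by
  obtain ⟨b, hcb, hgb, hpos⟩ := exists_zero_Ico_pos (g := fun t => g (-t)) (hg.comp continuous_neg)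
    (by simpa using hc) (neg_lt_neg hzc) (by simpa using hz)
  refine ⟨-b, by linarith, hgb, fun t ht => ?_⟩
  simpa using hpos (-t) ⟨neg_le_neg ht.2, by linarith [ht.1]⟩

theorem exists_Ioo_pos_of_zeros {g : ℝ → ℝ} {a₀ c b₀ : ℝ} (hg : Continuous g) (hc : 0 < g c)
    (ha₀ : a₀ < c) (hga₀ : g a₀ = 0) (hb₀ : c < b₀) (hgb₀ : g b₀ = 0) :
    ∃ a b, a < b ∧ g a = 0 ∧ g b = 0 ∧ ∀ t ∈ Ioo a b, 0 < g t := by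
  obtain ⟨a, hac, hga, hpos_left⟩ := exists_zero_Ioc_pos hg hc ha₀ hga₀
  obtain ⟨b, hcb, hgb, hpos_right⟩ := exists_zero_Ico_pos hg hc hb₀ hgb₀
  refine ⟨a, b, hac.trans hcb, hga, hgb, fun t ht => ?_⟩
  rcases le_total t c with htc | hct
  · exact hpos_left t ⟨ht.1, htc⟩
  · exact hpos_right t ⟨hct, ht.2⟩

theorem exists_mem_Icc_nonpos_of_sturm {p q y u : ℝ → ℝ} {a b : ℝ} (hab : a < b)
    (hy : Differentiable ℝ y) (hy' : Differentiable ℝ (deriv y))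
    (hu : Differentiable ℝ u) (hu' : Differentiable ℝ (deriv u))
    (hy_ode : ∀ t ∈ Ioo a b, deriv (deriv y) t + q t * y t = 0)
    (hu_ode : ∀ t ∈ Ioo a b, deriv (deriv u) t + p t * u t = 0)
    (hqp : ∀ t ∈ Ioo a b, q t ≤ p t)
    (hya : y a = 0) (hyb : y b = 0) (hy_pos : ∀ t ∈ Ioo a b, 0 < y t) :
    ∃ t ∈ Icc a b, u t ≤ 0 := by
  by_contra! hu_pos
  set W := fun t => deriv y t * u t - y t * deriv u t
  have hW : ∀ t, HasDerivAt W (deriv (deriv y) t * u t - y t * deriv (deriv u) t) t := fun t =>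
    (((hy' t).hasDerivAt.mul (hu t).hasDerivAt).sub
      ((hy t).hasDerivAt.mul (hu' t).hasDerivAt)).congr_deriv (by ring)
  have hW_mono : MonotoneOn W (Ioo a b) := by
    refine monotoneOn_of_deriv_nonneg (convex_Ioo a b)
      (fun t _ => (hW t).continuousAt.continuousWithinAt)
      (fun t _ => (hW t).differentiableAt.differentiableWithinAt) fun t ht => ?_
    rw [interior_Ioo] at ht
    have hW_eq : deriv (deriv y) t * u t - y t * deriv (deriv u) t = (p t - q t) * y t * u t := by
      linear_combination u t * hy_ode t ht - y t * hu_ode t ht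
    rw [(hW t).deriv, hW_eq]
    exact mul_nonneg (mul_nonneg (sub_nonneg.2 (hqp t ht)) (hy_pos t ht).le)
      (hu_pos t (Ioo_subset_Icc_self ht)).le
  set g := fun t => y t / u t
  have hg : ∀ t ∈ Icc a b, HasDerivAt g (W t / u t ^ 2) t := fun t ht =>
    (hy t).hasDerivAt.div (hu t).hasDerivAt (hu_pos t ht).ne'
  have hg_cont : ContinuousOn g (Icc a b) := fun t ht => (hg t ht).continuousAt.continuousWithinAt
  obtain ⟨m, hm⟩ := nonempty_Ioo.2 hab
  have hgm : 0 < g m := div_pos (hy_pos m hm) (hu_pos m (Ioo_subset_Icc_self hm))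
  -- `g` rises from `g a = 0` to `g m > 0` and falls back to `g b = 0`.
  obtain ⟨ξ, hξ, hgξ⟩ := exists_hasDerivAt_eq_slope g (fun t => W t / u t ^ 2) hm.1
    (hg_cont.mono (Icc_subset_Icc le_rfl hm.2.le))
    fun t ht => hg t ⟨ht.1.le, (ht.2.trans hm.2).le⟩
  obtain ⟨η, hη, hgη⟩ := exists_hasDerivAt_eq_slope g (fun t => W t / u t ^ 2) hm.2
    (hg_cont.mono (Icc_subset_Icc hm.1.le le_rfl))
    fun t ht => hg t ⟨(hm.1.trans ht.1).le, ht.2.le⟩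
  have hWξ : 0 < W ξ := by
    have : 0 < W ξ / u ξ ^ 2 := by
      rw [hgξ]; exact div_pos (by simpa [g, hya] using hgm) (by linarith [hm.1])
    exact (div_pos_iff_of_pos_right (pow_pos (hu_pos ξ ⟨hξ.1.le, (hξ.2.trans hm.2).le⟩) 2)).mp this
  have hWη : W η < 0 := by
    have : W η / u η ^ 2 < 0 := by
      rw [hgη]; exact div_neg_of_neg_of_pos (by simpa [g, hyb] using hgm) (by linarith [hm.2])
    exact neg_of_div_neg_left this (sq_nonneg _)
  exact (hW_mono ⟨hξ.1, hξ.2.trans hm.2⟩ ⟨hm.1.trans hη.1, hη.2⟩ (hξ.2.trans hη.1).le).not_gt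
    (hWη.trans hWξ)

theorem hasDerivAt_deriv_deriv_of_cubic_ode {δ μ : ℝ} {v : ℝ → ℝ} (hv : Differentiable ℝ v)
    (hode : ∀ t, deriv (deriv v) t - δ ^ 2 * v t + μ * v t ^ 3 = 0) (t : ℝ) :
    HasDerivAt (deriv (deriv v)) ((δ ^ 2 - 3 * μ * v t ^ 2) * deriv v t) t := by
  have hv'' : deriv (deriv v) = fun s => δ ^ 2 * v s - μ * v s ^ 3 :=
    funext fun s => by linear_combination hode s
  rw [hv'']
  have hvt := (hv t).hasDerivAt
  exact ((hvt.const_mul _).sub ((hvt.pow 3).const_mul μ)).congr_deriv (by push_cast; ring)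

theorem stmt_16_general (δ μ₂ β : ℝ) (hβ : 3 * μ₂ ≤ β)
    (v₂ : ℝ → ℝ) (hv₂ : ContDiff ℝ 2 v₂)
    (hper : ∃ L > (0:ℝ), Function.Periodic v₂ L)
    (hnonconst : ¬ ∃ c : ℝ, ∀ t, v₂ t = c)
    (heq : ∀ t, deriv (deriv v₂) t - δ^2 * v₂ t + μ₂ * (v₂ t)^3 = 0) :
    ¬ ∃ v₁ : ℝ → ℝ, ContDiff ℝ 2 v₁ ∧ (∀ t, 0 < v₁ t) ∧
      (∀ t, deriv (deriv v₁) t + (β * (v₂ t)^2 - δ^2) * v₁ t = 0) := by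
  rintro ⟨v₁, hv₁, hv₁_pos, hv₁_ode⟩
  obtain ⟨L, hL, hper⟩ := hper
  have hv₂_diff : Differentiable ℝ v₂ := hv₂.differentiable (by norm_num)
  have hy'' := hasDerivAt_deriv_deriv_of_cubic_ode hv₂_diff heq
  obtain ⟨c, hc⟩ := hper.exists_deriv_pos hL hv₂_diff hnonconst
  obtain ⟨z₁, hz₁, hyz₁⟩ := hper.exists_deriv_eq_zero hL hv₂_diff (c - L)
  obtain ⟨z₂, hz₂, hyz₂⟩ := hper.exists_deriv_eq_zero hL hv₂_diff c
  obtain ⟨a, b, hab, hya, hyb, hy_pos⟩ := exists_Ioo_pos_of_zeros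
    hv₂.differentiable_deriv_two.continuous hc (by linarith [hz₁.2]) hyz₁ hz₂.1 hyz₂
  obtain ⟨t, -, hv₁t⟩ := exists_mem_Icc_nonpos_of_sturm
    (q := fun t => 3 * μ₂ * v₂ t ^ 2 - δ ^ 2) (p := fun t => β * v₂ t ^ 2 - δ ^ 2) hab
    hv₂.differentiable_deriv_two (fun t => (hy'' t).differentiableAt)
    (hv₁.differentiable (by norm_num)) hv₁.differentiable_deriv_two
    (fun t _ => by rw [(hy'' t).deriv]; ring) (fun t _ => hv₁_ode t) (fun t _ => by gcongr)
    hya hyb hy_pos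
  exact (hv₁_pos t).not_ge hv₁t

theorem stmt_16 (δ μ₂ β : ℝ) (hδ : 0 < δ) (hμ₂ : 0 < μ₂) (hβ : 3 * μ₂ ≤ β) (hβ0 : 0 < β)
    (v₂ : ℝ → ℝ) (hv₂ : ContDiff ℝ 2 v₂) (hpos : ∀ t, 0 < v₂ t)
    (hper : ∃ L > (0:ℝ), Function.Periodic v₂ L)
    (hnonconst : ¬ ∃ c : ℝ, ∀ t, v₂ t = c)
    (heq : ∀ t, deriv (deriv v₂) t - δ^2 * v₂ t + μ₂ * (v₂ t)^3 = 0) :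
    ¬ ∃ v₁ : ℝ → ℝ, ContDiff ℝ 2 v₁ ∧ (∀ t, 0 < v₁ t) ∧
      (∀ t, deriv (deriv v₁) t + (β * (v₂ t)^2 - δ^2) * v₁ t = 0) :=
  stmt_16_general δ μ₂ β hβ v₂ hv₂ hper hnonconst heq
end

section
/- Let δ > 0 and w: ℝ → (0,∞) a C² function satisfying w''(t) ≥ δ²w(t) - c·w(t)² for some c > 0, and suppose ε ∈ (0, δ²/(2c)). If t* < t₁ are such that w(t*) = ε and w'(t) < 0 for t ∈ [t*, t₁), and w''(t) > 0 whenever w(t) < 2ε, then there is a constant c₁ > 0 (independent of t*, t₁) with t - t* ≤ (1/δ)·log(w(t*)/w(t)) + c₁ for all t ∈ (t*, t₁]. -/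
/-!
While `w` decreases, so does the energy `w'² - δ²w² + (2c/3)w³`, which bounds `|w'|` from
below by `δ w √(1 - x)` with `x = (2c/(3δ²)) w + m²/w²`, where `m` is the final value of `w`.
As long as `w ≥ 2m` we have `x ≤ 3/4` and `(1 - x)(1 + 2x)² ≥ 1`, so
`log w + δ t + (4c/(3δ²)) w - m²/w²` is nonincreasing: `w` decays at the exact rate `δ` up to a
bounded factor. Once `w ≤ 2m`, we have `w'' ≥ δ²m/2`; since `w' ≤ 0` at the end, convexity
leaves at most time `2/δ` for `w` to come down to `m`.
-/

open Set Real

lemma one_le_one_sub_mul_one_add_two_mul_sq {x : ℝ} (hx₀ : 0 ≤ x) (hx₁ : x ≤ 3 / 4) :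
    1 ≤ (1 - x) * (1 + 2 * x) ^ 2 := by
  nlinarith [mul_nonneg hx₀ (by nlinarith : 0 ≤ 3 - 4 * x ^ 2)]

lemma mul_le_neg_mul_one_add_two_mul {δ c m u v : ℝ} (hδ : 0 < δ) (hc : 0 ≤ c)
    (hm : 0 ≤ m) (hv : 0 < v) (hu : u ≤ 0)
    (hsq : δ ^ 2 * v ^ 2 - 2 * c / 3 * v ^ 3 - δ ^ 2 * m ^ 2 ≤ u ^ 2) (hlarge : 2 * m ≤ v)
    (hsmall : 2 * c * v ≤ δ ^ 2) :
    δ * v ≤ -u * (1 + 2 * (2 * c / (3 * δ ^ 2) * v + m ^ 2 / v ^ 2)) := by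
  set x := 2 * c / (3 * δ ^ 2) * v + m ^ 2 / v ^ 2 with hx
  have hx₀ : 0 ≤ x := by positivity
  have hx₁ : x ≤ 3 / 4 := by
    have h₁ : 2 * c / (3 * δ ^ 2) * v ≤ 1 / 3 := by
      rw [div_mul_eq_mul_div, div_le_iff₀ (by positivity)]; linarith
    have h₂ : m ^ 2 / v ^ 2 ≤ 1 / 4 := by
      rw [div_le_iff₀ (by positivity)]; nlinarith
    linarith
  have hrate : δ ^ 2 * v ^ 2 * (1 - x) ≤ u ^ 2 := by
    convert hsq using 1
    rw [hx]; field_simp; ring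
  have hsq' : (δ * v) ^ 2 ≤ (-u * (1 + 2 * x)) ^ 2 := calc
    (δ * v) ^ 2 ≤ δ ^ 2 * v ^ 2 * ((1 - x) * (1 + 2 * x) ^ 2) := by
      nlinarith [one_le_one_sub_mul_one_add_two_mul_sq hx₀ hx₁, sq_nonneg (δ * v)]
    _ = δ ^ 2 * v ^ 2 * (1 - x) * (1 + 2 * x) ^ 2 := by ring
    _ ≤ u ^ 2 * (1 + 2 * x) ^ 2 := by gcongr
    _ = (-u * (1 + 2 * x)) ^ 2 := by ring
  exact (pow_le_pow_iff_left₀ (by positivity) (by nlinarith) two_ne_zero).mp hsq'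

section

variable {δ c : ℝ} {w : ℝ → ℝ} {a b : ℝ}

lemma antitoneOn_Icc_of_deriv_nonpos (hw : Differentiable ℝ w)
    (hd : ∀ s ∈ Ioo a b, deriv w s ≤ 0) : AntitoneOn w (Icc a b) :=
  antitoneOn_of_deriv_nonpos (convex_Icc a b) hw.continuous.continuousOn hw.differentiableOn
    (by simpa only [interior_Icc] using hd)

lemma le_sq_deriv_of_le_deriv_deriv (hc : 0 ≤ c) (hw : Differentiable ℝ w)
    (hw' : Differentiable ℝ (deriv w)) (hb : 0 ≤ w b)
    (hineq : ∀ s ∈ Ioo a b, δ ^ 2 * w s - c * w s ^ 2 ≤ deriv (deriv w) s)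
    (hd : ∀ s ∈ Ioo a b, deriv w s ≤ 0) :
    ∀ s ∈ Icc a b,
      δ ^ 2 * w s ^ 2 - 2 * c / 3 * w s ^ 3 - δ ^ 2 * w b ^ 2 ≤ deriv w s ^ 2 := by
  set E : ℝ → ℝ := fun s => deriv w s ^ 2 - δ ^ 2 * w s ^ 2 + 2 * c / 3 * w s ^ 3
  have hE : ∀ s, HasDerivAt E
      (2 * deriv w s * (deriv (deriv w) s - (δ ^ 2 * w s - c * w s ^ 2))) s := fun s =>
    ((((hw' s).hasDerivAt.pow 2).sub (((hw s).hasDerivAt.pow 2).const_mul (δ ^ 2))).add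
      (((hw s).hasDerivAt.pow 3).const_mul (2 * c / 3))).congr_deriv (by push_cast; ring)
  have hanti : AntitoneOn E (Icc a b) :=
    antitoneOn_Icc_of_deriv_nonpos (fun s => (hE s).differentiableAt) fun s hs => by
      rw [(hE s).deriv]
      exact mul_nonpos_of_nonpos_of_nonneg (by linarith [hd s hs])
        (sub_nonneg.mpr (hineq s hs))
  intro s hs
  have hEb : E b ≤ E s := hanti hs (right_mem_Icc.mpr (hs.1.trans hs.2)) hs.2
  have : 0 ≤ deriv w b ^ 2 + 2 * c / 3 * w b ^ 3 := by positivity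
  simp only [E] at hEb
  linarith

lemma add_mul_sq_le_of_le_deriv_deriv {k : ℝ} (hw : Differentiable ℝ w)
    (hw' : Differentiable ℝ (deriv w)) (hab : a ≤ b)
    (hk : ∀ s ∈ Ioo a b, k ≤ deriv (deriv w) s) (hb : deriv w b ≤ 0) :
    w b + k / 2 * (b - a) ^ 2 ≤ w a := by
  have hq : ∀ s, HasDerivAt (fun s => deriv w s - k * s) (deriv (deriv w) s - k) s := fun s =>
    ((hw' s).hasDerivAt.sub ((hasDerivAt_id s).const_mul k)).congr_deriv (by simp)
  have hmono : MonotoneOn (fun s => deriv w s - k * s) (Icc a b) :=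
    monotoneOn_of_deriv_nonneg (convex_Icc a b)
      (continuous_iff_continuousAt.mpr fun s => (hq s).continuousAt).continuousOn
      (fun s _ => (hq s).differentiableAt.differentiableWithinAt)
      (by simpa only [interior_Icc, (hq _).deriv, sub_nonneg] using hk)
  have hslope : ∀ s ∈ Icc a b, deriv w s ≤ -k * (b - s) := fun s hs => by
    have := hmono hs (right_mem_Icc.mpr hab) hs.2
    simp only at this
    linarith
  have hg : ∀ s, HasDerivAt (fun s => w s - k / 2 * (b - s) ^ 2) (deriv w s + k * (b - s)) s :=
    fun s => ((hw s).hasDerivAt.sub ((((hasDerivAt_id s).const_sub b).pow 2).const_mul (k / 2)))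
      |>.congr_deriv (by simp; ring)
  have hanti : AntitoneOn (fun s => w s - k / 2 * (b - s) ^ 2) (Icc a b) :=
    antitoneOn_Icc_of_deriv_nonpos (fun s => (hg s).differentiableAt) fun s hs => by
      rw [(hg s).deriv]
      linarith [hslope s (Ioo_subset_Icc_self hs)]
  have := hanti (left_mem_Icc.mpr hab) (right_mem_Icc.mpr hab) hab
  simp only [sub_self] at this
  linarith

lemma mul_sub_le_two_of_le_two_mul (hw : Differentiable ℝ w)
    (hw' : Differentiable ℝ (deriv w)) (hab : a ≤ b) (hb : 0 < w b)
    (hineq : ∀ s ∈ Ioo a b, δ ^ 2 * w s - c * w s ^ 2 ≤ deriv (deriv w) s)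
    (hdb : deriv w b ≤ 0) (hlower : ∀ s ∈ Icc a b, w b ≤ w s)
    (hsmall : ∀ s ∈ Icc a b, 2 * c * w s ≤ δ ^ 2) (ha : w a ≤ 2 * w b) :
    δ * (b - a) ≤ 2 := by
  have hk : ∀ s ∈ Ioo a b, δ ^ 2 * w b / 2 ≤ deriv (deriv w) s := fun s hs => by
    have hs' := Ioo_subset_Icc_self hs
    have := hsmall s hs'
    nlinarith [hineq s hs, hlower s hs',
      mul_le_mul_of_nonneg_left this (hb.le.trans (hlower s hs'))]
  have hconv := add_mul_sq_le_of_le_deriv_deriv hw hw' hab hk hdb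
  have hsq : (δ * (b - a)) ^ 2 ≤ 2 ^ 2 := by
    refine le_of_mul_le_mul_left ?_ hb
    nlinarith
  nlinarith

lemma mul_sub_le_log_div_add_one (hδ : 0 < δ) (hc : 0 ≤ c) (hw : Differentiable ℝ w)
    (hpos : ∀ s, 0 < w s) (hab : a ≤ b) {m : ℝ} (hm : 0 ≤ m)
    (hd : ∀ s ∈ Ioo a b, deriv w s ≤ 0)
    (hsq : ∀ s ∈ Ioo a b,
      δ ^ 2 * w s ^ 2 - 2 * c / 3 * w s ^ 3 - δ ^ 2 * m ^ 2 ≤ deriv w s ^ 2)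
    (hlarge : ∀ s ∈ Icc a b, 2 * m ≤ w s)
    (hsmall : ∀ s ∈ Icc a b, 2 * c * w s ≤ δ ^ 2) :
    δ * (b - a) ≤ log (w a / w b) + 1 := by
  set Φ : ℝ → ℝ := fun s => log (w s) + δ * s + 4 * c / (3 * δ ^ 2) * w s - m ^ 2 / w s ^ 2
  have hΦ : ∀ s, HasDerivAt Φ
      (δ + deriv w s * (1 + 2 * (2 * c / (3 * δ ^ 2) * w s + m ^ 2 / w s ^ 2)) / w s) s := by
    intro s
    have hws := (hpos s).ne'
    have hlog := (hw s).hasDerivAt.log hws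
    have hlin : HasDerivAt (fun s : ℝ => δ * s) δ s := by
      simpa using (hasDerivAt_id s).const_mul δ
    have hrec := (hasDerivAt_const s (m ^ 2)).div ((hw s).hasDerivAt.pow 2) (pow_ne_zero 2 hws)
    have := (((hlog.add hlin).add ((hw s).hasDerivAt.const_mul (4 * c / (3 * δ ^ 2)))).sub hrec)
    refine this.congr_deriv ?_
    simp only [Pi.pow_apply]
    field_simp
    ring
  have hanti : AntitoneOn Φ (Icc a b) :=
    antitoneOn_Icc_of_deriv_nonpos (fun s => (hΦ s).differentiableAt) fun s hs => by
      have hs' := Ioo_subset_Icc_self hs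
      have hrate := mul_le_neg_mul_one_add_two_mul hδ hc hm (hpos s) (hd s hs) (hsq s hs)
        (hlarge s hs') (hsmall s hs')
      have : deriv w s * (1 + 2 * (2 * c / (3 * δ ^ 2) * w s + m ^ 2 / w s ^ 2)) / w s ≤
          -δ := by
        rw [div_le_iff₀ (hpos s)]
        linarith
      rw [(hΦ s).deriv]
      linarith
  have hΦab := hanti (left_mem_Icc.mpr hab) (right_mem_Icc.mpr hab) hab
  have ha : 4 * c / (3 * δ ^ 2) * w a ≤ 2 / 3 := by
    rw [div_mul_eq_mul_div, div_le_iff₀ (by positivity)]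
    linarith [hsmall a (left_mem_Icc.mpr hab)]
  have hb : m ^ 2 / w b ^ 2 ≤ 1 / 4 := by
    rw [div_le_iff₀ (pow_pos (hpos b) 2)]
    nlinarith [hlarge b (right_mem_Icc.mpr hab)]
  have : 0 ≤ 4 * c / (3 * δ ^ 2) * w b := by have := hpos b; positivity
  have : 0 ≤ m ^ 2 / w a ^ 2 := by positivity
  simp only [Φ] at hΦab
  rw [log_div (hpos a).ne' (hpos b).ne']
  linarith

lemma mul_sub_le_log_div_add_three (hδ : 0 < δ) (hc : 0 ≤ c) (hw : Differentiable ℝ w)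
    (hw' : Differentiable ℝ (deriv w)) (hpos : ∀ s, 0 < w s)
    (hineq : ∀ s ∈ Ioo a b, δ ^ 2 * w s - c * w s ^ 2 ≤ deriv (deriv w) s)
    (hab : a < b) (hd : ∀ s ∈ Ioo a b, deriv w s ≤ 0) (ha : 2 * c * w a ≤ δ ^ 2) :
    δ * (b - a) ≤ log (w a / w b) + 3 := by
  have hanti := antitoneOn_Icc_of_deriv_nonpos hw hd
  have hlower : ∀ s ∈ Icc a b, w b ≤ w s := fun s hs =>
    hanti hs (right_mem_Icc.mpr hab.le) hs.2
  have hsmall : ∀ s ∈ Icc a b, 2 * c * w s ≤ δ ^ 2 := fun s hs =>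
    le_trans (by gcongr; exact hanti (left_mem_Icc.mpr hab.le) hs hs.1) ha
  have hdb : deriv w b ≤ 0 :=
    le_of_tendsto (hw'.continuous.continuousAt.continuousWithinAt (s := Iio b))
      (Filter.mem_of_superset (Ioo_mem_nhdsLT hab) hd)
  have hsq := le_sq_deriv_of_le_deriv_deriv hc hw hw' (hpos b).le hineq hd
  have htail : ∀ t ∈ Icc a b, w t ≤ 2 * w b → δ * (b - t) ≤ 2 := fun t ht h2 =>
    mul_sub_le_two_of_le_two_mul hw hw' ht.2 (hpos b)
      (fun s hs => hineq s ⟨ht.1.trans_lt hs.1, hs.2⟩) hdb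
      (fun s hs => hlower s ⟨ht.1.trans hs.1, hs.2⟩)
      (fun s hs => hsmall s ⟨ht.1.trans hs.1, hs.2⟩) h2
  have hlog : ∀ t ∈ Icc a b, log (w a / w t) ≤ log (w a / w b) := fun t ht =>
    log_le_log (div_pos (hpos a) (hpos t))
      (div_le_div_of_nonneg_left (hpos a).le (hpos b) (hlower t ht))
  rcases le_or_gt (w a) (2 * w b) with h | h
  · have := htail a (left_mem_Icc.mpr hab.le) h
    have := log_nonneg ((one_le_div (hpos b)).mpr (hlower a (left_mem_Icc.mpr hab.le)))
    linarith
  · obtain ⟨t, ht, hwt⟩ := intermediate_value_Icc' hab.le hw.continuous.continuousOn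
      (⟨by linarith [hpos b], h.le⟩ : 2 * w b ∈ Icc (w b) (w a))
    have hhead := mul_sub_le_log_div_add_one hδ hc hw hpos ht.1 (hpos b).le
      (fun s hs => hd s ⟨hs.1, hs.2.trans_le ht.2⟩)
      (fun s hs => hsq s ⟨hs.1.le, hs.2.le.trans ht.2⟩)
      (fun s hs => hwt ▸ hanti ⟨hs.1, hs.2.trans ht.2⟩ ht hs.2)
      (fun s hs => hsmall s ⟨hs.1, hs.2.trans ht.2⟩)
    linarith [htail t ht hwt.le, hlog t ht]

end

theorem stmt_17_general (δ c ε : ℝ) (hδ : 0 < δ) (hc : 0 < c) (hε' : ε < δ^2 / (2*c))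
    (w : ℝ → ℝ) (hw : ContDiff ℝ 2 w) (hpos : ∀ t, 0 < w t)
    (hineq : ∀ t, δ^2 * w t - c * (w t)^2 ≤ deriv (deriv w) t) :
    ∃ c₁ > (0:ℝ), ∀ tstar t₁ : ℝ, tstar < t₁ → w tstar = ε →
      (∀ t ∈ Set.Ico tstar t₁, deriv w t < 0) →
      ∀ t ∈ Set.Ioc tstar t₁, t - tstar ≤ (1/δ) * Real.log (w tstar / w t) + c₁ := by
  have hcε : 2 * c * ε ≤ δ ^ 2 := by
    rw [lt_div_iff₀ (by positivity)] at hε'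
    linarith
  refine ⟨3 / δ, by positivity, fun tstar t₁ _ hwts hderiv t ht => ?_⟩
  have hdecay := mul_sub_le_log_div_add_three hδ hc.le (hw.differentiable two_ne_zero)
    hw.differentiable_deriv_two hpos (fun s _ => hineq s) ht.1
    (fun s hs => (hderiv s ⟨hs.1.le, hs.2.trans_le ht.2⟩).le) (hwts ▸ hcε)
  calc t - tstar = δ * (t - tstar) / δ := by field_simp
    _ ≤ (log (w tstar / w t) + 3) / δ := by gcongr
    _ = 1 / δ * log (w tstar / w t) + 3 / δ := by ring

theorem stmt_17 (δ c ε : ℝ) (hδ : 0 < δ) (hc : 0 < c) (hε : 0 < ε) (hε' : ε < δ^2 / (2*c))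
    (w : ℝ → ℝ) (hw : ContDiff ℝ 2 w) (hpos : ∀ t, 0 < w t)
    (hineq : ∀ t, δ^2 * w t - c * (w t)^2 ≤ deriv (deriv w) t)
    (hconv : ∀ t, w t < 2*ε → 0 < deriv (deriv w) t) :
    ∃ c₁ > (0:ℝ), ∀ tstar t₁ : ℝ, tstar < t₁ → w tstar = ε →
      (∀ t ∈ Set.Ico tstar t₁, deriv w t < 0) →
      ∀ t ∈ Set.Ioc tstar t₁, t - tstar ≤ (1/δ) * Real.log (w tstar / w t) + c₁ :=
  stmt_17_general δ c ε hδ hc hε' w hw hpos hineq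
end
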